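/- arXiv:2603.02358 — 9 statements merged into one kernel-verified Lean document; each statement's English description precedes it below -/
import Mathlib

section
/- Let I ⊂ S = K[x_1,...,x_n] be a squarefree monomial ideal generated in degrees ≥ |supp(I)| − 2, where supp(I) is the union of supports of the minimal monomial generators of I. Then for every subset F ⊆ [n], the monomial localization I(P_F) is a squarefree monomial ideal generated in degrees ≥ |supp(I(P_F))| − 2. -/
open MvPolynomial

/-- The monomial localization map `φ_F : K[x_1,…,x_n] → K[x_i : i ∈ F]`. -/
noncomputable def monLoc (K : Type*) [Field K] {n : ℕ} (F : Finset (Fin n)) :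
    MvPolynomial (Fin n) K →ₐ[K] MvPolynomial {i : Fin n // i ∈ F} K :=
  aeval fun i => if h : i ∈ F then X ⟨i, h⟩ else 1


lemma auxCard {α : Type*} [DecidableEq α] (S a : Finset α) (p : α → Prop) [DecidablePred p]
    (hsub : a ⊆ S) (h : S.card ≤ a.card + 2) :
    (S.filter p).card ≤ (a.filter p).card + 2 := by
  have h1 : S.filter p \ a.filter p ⊆ S \ a := by
    intro x
    simp only [Finset.mem_sdiff, Finset.mem_filter]
    tauto
  have h2 : (S \ a).card ≤ 2 := by
    rw [Finset.card_sdiff_of_subset hsub]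
    have := Finset.card_le_card hsub
    omega
  calc (S.filter p).card ≤ (S.filter p \ a.filter p).card + (a.filter p).card :=
        Finset.card_le_card_sdiff_add_card
    _ ≤ (S \ a).card + (a.filter p).card := by
        exact Nat.add_le_add_right (Finset.card_le_card h1) _
    _ ≤ (a.filter p).card + 2 := by omega

lemma auxSup {n : ℕ} (A : Finset (Finset (Fin n))) (F : Finset (Fin n)) :
    (A.sup fun a => a.subtype (· ∈ F)) = (A.sup id).subtype (· ∈ F) := by
  ext x
  simp [Finset.mem_sup]


/-- A squarefree monomial ideal generated in degrees `≥ |supp(I)| − 2` localizes,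
at any monomial prime `P_F`, to a squarefree monomial ideal generated in degrees
`≥ |supp(I(P_F))| − 2`. Squarefree monomials are encoded by their supports. -/
theorem stmt1 {K : Type*} [Field K] {n : ℕ} (A : Finset (Finset (Fin n)))
    (I : Ideal (MvPolynomial (Fin n) K))
    (hI : I = Ideal.span
      ((fun a : Finset (Fin n) => ∏ i ∈ a, (X i : MvPolynomial (Fin n) K)) '' ↑A))
    (hdeg : ∀ a ∈ A, (A.sup id).card ≤ a.card + 2)
    (F : Finset (Fin n)) :
    ∃ B : Finset (Finset {i : Fin n // i ∈ F}),
      Ideal.map (monLoc K F) I = Ideal.span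
        ((fun b : Finset {i : Fin n // i ∈ F} =>
          ∏ i ∈ b, (X i : MvPolynomial {i : Fin n // i ∈ F} K)) '' ↑B) ∧
      ∀ b ∈ B, (B.sup id).card ≤ b.card + 2 := by
  classical
  refine ⟨A.image (fun a => a.subtype (· ∈ F)), ?_, ?_⟩
  · rw [hI, Ideal.map_span]
    congr 1
    rw [← Set.image_comp, Finset.coe_image, ← Set.image_comp]
    apply Set.image_congr
    intro a _
    show (monLoc K F) (∏ i ∈ a, X i) = ∏ i ∈ a.subtype (· ∈ F), X i
    rw [monLoc, map_prod]
    simp only [aeval_X]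
    rw [Finset.prod_dite, Finset.subtype, Finset.prod_map]
    simp
    rfl
  · intro b hb
    simp only [Finset.mem_image] at hb
    obtain ⟨a, ha, rfl⟩ := hb
    rw [Finset.sup_image]
    have : (Finset.sup A (id ∘ fun a => a.subtype (· ∈ F))) = (A.sup id).subtype (· ∈ F) := by
      rw [← auxSup]; rfl
    rw [this, Finset.card_subtype, Finset.card_subtype]
    exact auxCard _ _ _ (Finset.le_sup (f := id) ha) (hdeg a ha)
end

section
/- Let I_x ⊂ S_x = K[x_1,...,x_p] (p ≥ 2) be the squarefree Veronese ideal generated by all monomials x_1⋯x_p/x_i for i ∈ [p]. Then depth(S_x / I_x^{p-1}) = 0; more precisely, for u = (x_1⋯x_p)^{p-2} one has u ∉ I_x^{p-1} while x_i u ∈ I_x^{p-1} for all i ∈ [p], so (I_x^{p-1} : u) = (x_1,...,x_p). -/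
open MvPolynomial

/-- Depth of a module with respect to an ideal `J`: the supremum of lengths of
`M`-regular sequences with entries in `J`. -/
noncomputable def seqDepth {R : Type*} [CommRing R] (J : Ideal R)
    (M : Type*) [AddCommGroup M] [Module R M] : ℕ :=
  sSup {d | ∃ rs : List R, rs.length = d ∧ (∀ r ∈ rs, r ∈ J) ∧
    RingTheory.Sequence.IsRegular M rs}

private lemma prod_mem_pow_card {R : Type*} [CommRing R] (I : Ideal R) {ι : Type*}
    [DecidableEq ι] (s : Finset ι) (f : ι → R) (h : ∀ j ∈ s, f j ∈ I) :
    ∏ j ∈ s, f j ∈ I ^ s.card := by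
  induction s using Finset.induction with
  | empty => simp
  | @insert a s ha ih =>
    rw [Finset.prod_insert ha, Finset.card_insert_of_notMem ha, pow_succ']
    exact Ideal.mul_mem_mul (h a (Finset.mem_insert_self a s))
      (ih fun j hj => h j (Finset.mem_insert_of_mem hj))

theorem stmt4 {K : Type*} [Field K] {p : ℕ} (hp : 2 ≤ p)
    (Ix : Ideal (MvPolynomial (Fin p) K))
    (hIx : Ix = Ideal.span {m | ∃ i : Fin p, m = ∏ t ∈ Finset.univ.erase i, X t}) :
    seqDepth (Ideal.span (Set.range (X : Fin p → MvPolynomial (Fin p) K)))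
        (MvPolynomial (Fin p) K ⧸ Ix ^ (p - 1)) = 0 ∧
    (∏ t : Fin p, (X t : MvPolynomial (Fin p) K)) ^ (p - 2) ∉ Ix ^ (p - 1) ∧
    (∀ i : Fin p,
      X i * (∏ t : Fin p, (X t : MvPolynomial (Fin p) K)) ^ (p - 2) ∈ Ix ^ (p - 1)) ∧
    Submodule.colon (Ix ^ (p - 1))
        (Ideal.span {(∏ t : Fin p, (X t : MvPolynomial (Fin p) K)) ^ (p - 2)}) =
      Ideal.span (Set.range (X : Fin p → MvPolynomial (Fin p) K)) := by
  classical
  set u : MvPolynomial (Fin p) K := (∏ t : Fin p, X t) ^ (p - 2) with hu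
  set mI : Ideal (MvPolynomial (Fin p) K) :=
    Ideal.span (Set.range (X : Fin p → MvPolynomial (Fin p) K)) with hmI
  have hcard_erase : ∀ i : Fin p, (Finset.univ.erase i).card = p - 1 := by
    intro i
    rw [Finset.card_erase_of_mem (Finset.mem_univ i), Finset.card_univ, Fintype.card_fin]
  -- u ∉ Ix ^ (p-1)
  have hnotmem : u ∉ Ix ^ (p - 1) := by
    intro hmem
    set φ : MvPolynomial (Fin p) K →+* Polynomial K :=
      (aeval (fun _ : Fin p => (Polynomial.X : Polynomial K))).toRingHom with hφ
    have h1 : φ u ∈ Ideal.map φ (Ix ^ (p - 1)) := Ideal.mem_map_of_mem φ hmem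
    rw [Ideal.map_pow, hIx, Ideal.map_span] at h1
    have h2 : Ideal.span (φ '' {m | ∃ i : Fin p, m = ∏ t ∈ Finset.univ.erase i, X t}) ≤
        Ideal.span {(Polynomial.X : Polynomial K) ^ (p - 1)} := by
      rw [Ideal.span_le]
      rintro y ⟨m, ⟨i, rfl⟩, rfl⟩
      have : φ (∏ t ∈ Finset.univ.erase i, X t) = (Polynomial.X : Polynomial K) ^ (p - 1) := by
        rw [map_prod]
        simp only [hφ, AlgHom.toRingHom_eq_coe, RingHom.coe_coe, aeval_X]
        rw [Finset.prod_const, hcard_erase]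
      rw [this]
      exact Ideal.subset_span rfl
    have h3 : φ u ∈ Ideal.span {(Polynomial.X : Polynomial K) ^ ((p - 1) * (p - 1))} := by
      have := Ideal.pow_right_mono h2 (p - 1) h1
      rwa [Ideal.span_singleton_pow, ← pow_mul] at this
    have h4 : φ u = (Polynomial.X : Polynomial K) ^ (p * (p - 2)) := by
      rw [hu, map_pow, map_prod]
      simp only [hφ, AlgHom.toRingHom_eq_coe, RingHom.coe_coe, aeval_X]
      rw [Finset.prod_const, Finset.card_univ, Fintype.card_fin, ← pow_mul]
    rw [h4, Ideal.mem_span_singleton] at h3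
    have h5 := (pow_dvd_pow_iff (Polynomial.X_ne_zero) Polynomial.not_isUnit_X).mp h3
    obtain ⟨q, rfl⟩ : ∃ q, p = q + 2 := ⟨p - 2, by omega⟩
    have h6 : (q + 1) * (q + 1) ≤ (q + 2) * q := by
      simpa using h5
    nlinarith [h6]
  -- key identity
  have hkey : ∀ i : Fin p, X i * u =
      ∏ j ∈ Finset.univ.erase i, ∏ t ∈ Finset.univ.erase j, (X t : MvPolynomial (Fin p) K) := by
    intro i
    have hinner : ∀ j : Fin p, ∏ t ∈ Finset.univ.erase j, (X t : MvPolynomial (Fin p) K) =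
        ∏ t : Fin p, (if t = j then 1 else X t) := by
      intro j
      rw [← Finset.mul_prod_erase Finset.univ _ (Finset.mem_univ j), if_pos rfl, one_mul]
      exact Finset.prod_congr rfl fun t ht => by
        rw [if_neg (Finset.ne_of_mem_erase ht)]
    calc X i * u = X i ^ (p - 1) * ∏ t ∈ Finset.univ.erase i, (X t : MvPolynomial (Fin p) K) ^ (p - 2) := by
          rw [hu, ← Finset.prod_pow, ← Finset.mul_prod_erase Finset.univ _ (Finset.mem_univ i),
            ← mul_assoc, ← pow_succ']
          congr 2
          omega
      _ = ∏ j ∈ Finset.univ.erase i, ∏ t : Fin p, (if t = j then 1 else (X t : MvPolynomial (Fin p) K)) := by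
          rw [Finset.prod_comm]
          rw [← Finset.mul_prod_erase Finset.univ _ (Finset.mem_univ i)]
          congr 1
          · rw [Finset.prod_congr rfl fun j hj =>
              if_neg (fun h => Finset.ne_of_mem_erase hj h.symm), Finset.prod_const,
              hcard_erase]
          · refine Finset.prod_congr rfl fun t ht => ?_
            rw [← Finset.mul_prod_erase _ _ ht, if_pos rfl, one_mul]
            rw [Finset.prod_congr rfl fun j hj =>
              if_neg (fun h => Finset.ne_of_mem_erase hj h.symm), Finset.prod_const]
            congr 1
            rw [Finset.card_erase_of_mem ht, hcard_erase]
            omega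
      _ = ∏ j ∈ Finset.univ.erase i, ∏ t ∈ Finset.univ.erase j, (X t : MvPolynomial (Fin p) K) :=
          Finset.prod_congr rfl fun j _ => (hinner j).symm
  -- X i * u ∈ Ix ^ (p-1)
  have hmemXi : ∀ i : Fin p, X i * u ∈ Ix ^ (p - 1) := by
    intro i
    rw [hkey i]
    have := prod_mem_pow_card Ix (Finset.univ.erase i)
      (fun j => ∏ t ∈ Finset.univ.erase j, (X t : MvPolynomial (Fin p) K))
      (fun j _ => by rw [hIx]; exact Ideal.subset_span ⟨j, rfl⟩)
    rwa [hcard_erase] at this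
  -- mI ≤ colon
  have hcolon_ge : mI ≤ Submodule.colon (Ix ^ (p - 1)) (Ideal.span {u}) := by
    rw [hmI, Ideal.span_le]
    rintro - ⟨i, rfl⟩
    rw [SetLike.mem_coe, ← Ideal.submodule_span_eq, Submodule.mem_colon_span_singleton,
      smul_eq_mul]
    exact hmemXi i
  -- colon ≤ mI
  have hmI_mem : ∀ f : MvPolynomial (Fin p) K, constantCoeff f = 0 → f ∈ mI := by
    intro f hf
    rw [hmI, ← Set.image_univ]
    rw [mem_ideal_span_X_image]
    intro m hm
    by_contra hc
    push_neg at hc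
    have hm0 : m = 0 := Finsupp.ext fun i => hc i (Set.mem_univ i)
    rw [mem_support_iff, hm0] at hm
    exact hm hf
  have hcolon_le : Submodule.colon (Ix ^ (p - 1)) (Ideal.span {u}) ≤ mI := by
    intro r hr
    have hru : r * u ∈ Ix ^ (p - 1) := by
      rw [← Ideal.submodule_span_eq, Submodule.mem_colon_span_singleton] at hr
      simpa [smul_eq_mul] using hr
    have hc0 : constantCoeff r = 0 := by
      by_contra hc
      set c := constantCoeff r with hcdef
      have hr' : r - C c ∈ mI := hmI_mem _ (by simp [hcdef])
      have h1 : (r - C c) * u ∈ Ix ^ (p - 1) := by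
        have := hcolon_ge hr'
        rw [← Ideal.submodule_span_eq, Submodule.mem_colon_span_singleton] at this
        simpa [smul_eq_mul] using this
      have h2 : C c * u ∈ Ix ^ (p - 1) := by
        have : C c * u = r * u - (r - C c) * u := by ring
        rw [this]
        exact Ideal.sub_mem _ hru h1
      have h3 : u ∈ Ix ^ (p - 1) := by
        have : u = C c⁻¹ * (C c * u) := by
          rw [← mul_assoc, ← map_mul, inv_mul_cancel₀ hc, map_one, one_mul]
        rw [this]
        exact Ideal.mul_mem_left _ _ h2
      exact hnotmem h3
    exact hmI_mem r hc0
  have hcolon : Submodule.colon (Ix ^ (p - 1)) (Ideal.span {u}) = mI :=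
    le_antisymm hcolon_le hcolon_ge
  -- nontriviality of quotient
  have hne_top : Ix ^ (p - 1) ≠ ⊤ := by
    intro h
    exact hnotmem (h ▸ Submodule.mem_top)
  have : Nontrivial (MvPolynomial (Fin p) K ⧸ Ix ^ (p - 1)) :=
    Ideal.Quotient.nontrivial_iff.mpr hne_top
  -- depth = 0
  have hdepth : seqDepth mI (MvPolynomial (Fin p) K ⧸ Ix ^ (p - 1)) = 0 := by
    have hset : {d | ∃ rs : List (MvPolynomial (Fin p) K), rs.length = d ∧
        (∀ r ∈ rs, r ∈ mI) ∧
        RingTheory.Sequence.IsRegular (MvPolynomial (Fin p) K ⧸ Ix ^ (p - 1)) rs} = {0} := by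
      apply Set.eq_singleton_iff_unique_mem.mpr
      constructor
      · exact ⟨[], rfl, by simp, RingTheory.Sequence.IsRegular.nil _ _⟩
      · rintro d ⟨rs, hlen, hmem, hreg⟩
        by_contra hd
        obtain ⟨r, rest, rfl⟩ : ∃ r rest, rs = r :: rest := by
          cases rs with
          | nil => exact absurd (hlen.symm) hd
          | cons a l => exact ⟨a, l, rfl⟩
        have hr : IsSMulRegular (MvPolynomial (Fin p) K ⧸ Ix ^ (p - 1)) r :=
          ((RingTheory.Sequence.isRegular_cons_iff _ _ _).mp hreg).1
        have hru : r * u ∈ Ix ^ (p - 1) := by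
          have := hcolon_ge (hmem r (List.mem_cons_self))
          rw [← Ideal.submodule_span_eq, Submodule.mem_colon_span_singleton] at this
          simpa [smul_eq_mul] using this
        have h1 : r • (Ideal.Quotient.mk (Ix ^ (p - 1)) u) = 0 := by
          have heq : r • (Ideal.Quotient.mk (Ix ^ (p - 1)) u) =
              Ideal.Quotient.mk (Ix ^ (p - 1)) (r * u) := rfl
          rw [heq, Ideal.Quotient.eq_zero_iff_mem]
          exact hru
        have h2 := hr (h1.trans (smul_zero r).symm)
        rw [Ideal.Quotient.eq_zero_iff_mem] at h2
        exact hnotmem h2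
    unfold seqDepth
    rw [hset, csSup_singleton]
  exact ⟨hdepth, hnotmem, hmemXi, hcolon⟩
end

section
/- Let p,q ≥ 1, let I_x = ((x_1⋯x_p)/x_i : i ∈ [p]) ⊂ K[x_1,...,x_p] and let I_y ⊂ K[y_1,...,y_q] be a monomial ideal containing the monomial y = y_1⋯y_q. Set x = x_1⋯x_p. Then for all k ≥ 1 and 0 < ℓ ≤ k: (∑_{h=0}^{ℓ-1} x^{k−h} y^h I_y^{k−h} I_x^h) ∩ (x^{k−ℓ} y^ℓ I_y^{k−ℓ} I_x^ℓ) = x^{k−ℓ+1} I_x^{ℓ−1} y^ℓ I_y^{k−ℓ}, as ideals in K[x_1,...,x_p,y_1,...,y_q]. -/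
/-!
Since `x ∈ I_x`, the `h`-th summand lies in `x^{k-h} I_x^h ⊆ x^{k-ℓ+1} I_x^{ℓ-1}`, while
`J_ℓ ⊆ y^ℓ I_y^{k-ℓ}`. These two ideals are generated by monomials in disjoint sets of
variables, so their intersection is their product, which is the right-hand side. Conversely,
the right-hand side lies in `J_ℓ` because `x ∈ I_x` and in `J_{ℓ-1}` because `y ∈ I_y`.
-/

open MvPolynomial

/-- The ideal `x^{k−h} y^h I_y^{k−h} I_x^h` in `K[x_1,…,x_p,y_1,…,y_q]`. -/
noncomputable def Jh (K : Type*) [Field K] (p q : ℕ)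
    (Ix Iy : Ideal (MvPolynomial (Fin p ⊕ Fin q) K)) (k h : ℕ) :
    Ideal (MvPolynomial (Fin p ⊕ Fin q) K) :=
  Ideal.span {(∏ i : Fin p, X (Sum.inl i)) ^ (k - h) *
    (∏ j : Fin q, X (Sum.inr j)) ^ h} * Iy ^ (k - h) * Ix ^ h

open Pointwise

theorem Ideal.span_singleton_pow_mul_pow_le {R : Type*} [CommSemiring R] {x : R} {I : Ideal R}
    (hx : x ∈ I) {a b c d : ℕ} (hca : c ≤ a) (h : a + b = c + d) :
    Ideal.span {x ^ a} * I ^ b ≤ Ideal.span {x ^ c} * I ^ d := by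
  obtain ⟨n, rfl⟩ := Nat.exists_eq_add_of_le hca
  have hxn : Ideal.span {x} ^ n ≤ I ^ n :=
    Ideal.pow_right_mono ((Ideal.span_singleton_le_iff_mem I).2 hx) n
  calc Ideal.span {x ^ (c + n)} * I ^ b = Ideal.span {x ^ c} * Ideal.span {x} ^ n * I ^ b := by
        rw [Ideal.span_singleton_pow, Ideal.span_singleton_mul_span_singleton, pow_add]
    _ ≤ Ideal.span {x ^ c} * I ^ n * I ^ b := by gcongr
    _ = Ideal.span {x ^ c} * I ^ d := by rw [mul_assoc, ← pow_add]; congr 2; omega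

theorem Finsupp.add_le_of_disjoint_support {σ : Type*} {a b m : σ →₀ ℕ} (ha : a ≤ m)
    (hb : b ≤ m) (hab : Disjoint a.support b.support) : a + b ≤ m := by
  intro i
  by_cases hai : i ∈ a.support
  · have hbi : b i = 0 := Finsupp.notMem_support_iff.1 (Finset.disjoint_left.1 hab hai)
    simpa [hbi] using ha i
  · simpa [Finsupp.notMem_support_iff.1 hai] using hb i

namespace MvPolynomial

variable {σ R : Type*} [CommSemiring R]

variable (R) in
def monomialsIn (s : Set σ) : Submonoid (MvPolynomial σ R) where
  carrier := {f | ∃ d : σ →₀ ℕ, ↑d.support ⊆ s ∧ monomial d 1 = f}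
  mul_mem' := by
    classical
    rintro _ _ ⟨d, hd, rfl⟩ ⟨e, he, rfl⟩
    refine ⟨d + e, ?_, by rw [monomial_mul, one_mul]⟩
    exact (Finset.coe_subset.2 Finsupp.support_add).trans
      (by rw [Finset.coe_union]; exact Set.union_subset hd he)
  one_mem' := ⟨0, by simp, rfl⟩

theorem X_mem_monomialsIn {s : Set σ} {i : σ} (hi : i ∈ s) : X i ∈ monomialsIn R s :=
  ⟨Finsupp.single i 1, (Finset.coe_subset.2 Finsupp.support_single_subset).trans (by simpa),
    rfl⟩

theorem eq_image_monomial_of_subset_monomialsIn {s : Set σ} {G : Set (MvPolynomial σ R)}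
    (hG : G ⊆ monomialsIn R s) :
    G = (fun d => monomial d 1) '' {d | ↑d.support ⊆ s ∧ monomial d 1 ∈ G} := by
  ext f
  constructor
  · intro hf
    obtain ⟨d, hd, rfl⟩ := hG hf
    exact ⟨d, ⟨hd, hf⟩, rfl⟩
  · rintro ⟨d, ⟨-, hd⟩, rfl⟩
    exact hd

variable (R) in
def IsMonomialIdealIn (s : Set σ) (I : Ideal (MvPolynomial σ R)) : Prop :=
  ∃ G ⊆ (monomialsIn R s : Set (MvPolynomial σ R)), I = Ideal.span G

namespace IsMonomialIdealIn

variable {s t : Set σ} {I J : Ideal (MvPolynomial σ R)}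

theorem span_singleton {f : MvPolynomial σ R} (hf : f ∈ monomialsIn R s) :
    IsMonomialIdealIn R s (Ideal.span {f}) :=
  ⟨{f}, Set.singleton_subset_iff.2 hf, rfl⟩

theorem mul (hI : IsMonomialIdealIn R s I) (hJ : IsMonomialIdealIn R s J) :
    IsMonomialIdealIn R s (I * J) := by
  obtain ⟨G, hG, rfl⟩ := hI
  obtain ⟨H, hH, rfl⟩ := hJ
  exact ⟨G * H, Set.mul_subset_iff.2 fun f hf g hg => mul_mem (hG hf) (hH hg),
    Ideal.span_mul_span' G H⟩

theorem pow (hI : IsMonomialIdealIn R s I) (n : ℕ) : IsMonomialIdealIn R s (I ^ n) := by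
  induction n with
  | zero => simpa [Ideal.one_eq_top] using span_singleton (one_mem (monomialsIn R s))
  | succ n ih => exact pow_succ I n ▸ ih.mul hI

theorem inf_eq_mul (hI : IsMonomialIdealIn R s I) (hJ : IsMonomialIdealIn R t J)
    (hst : Disjoint s t) : I ⊓ J = I * J := by
  obtain ⟨G, hG, rfl⟩ := hI
  obtain ⟨H, hH, rfl⟩ := hJ
  refine le_antisymm ?_ Ideal.mul_le_inf
  have hGH : Ideal.span ((fun d => monomial d 1) '' {d | monomial d (1 : R) ∈ G * H}) ≤
      Ideal.span G * Ideal.span H := by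
    rw [Ideal.span_mul_span']
    exact Ideal.span_mono (Set.image_subset_iff.2 fun _ hd => hd)
  intro f hf
  rw [Ideal.mem_inf, eq_image_monomial_of_subset_monomialsIn hG,
    eq_image_monomial_of_subset_monomialsIn hH, mem_ideal_span_monomial_image,
    mem_ideal_span_monomial_image] at hf
  refine hGH (mem_ideal_span_monomial_image.2 fun m hm => ?_)
  obtain ⟨a, ⟨ha, haG⟩, ham⟩ := hf.1 m hm
  obtain ⟨b, ⟨hb, hbH⟩, hbm⟩ := hf.2 m hm
  refine ⟨a + b, ?_, Finsupp.add_le_of_disjoint_support ham hbm ?_⟩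
  · show monomial (a + b) 1 ∈ G * H
    rw [← one_mul (1 : R), ← monomial_mul]
    exact Set.mul_mem_mul haG hbH
  · exact Finset.disjoint_coe.1 (hst.mono ha hb)

end IsMonomialIdealIn

variable {s t : Set σ}

theorem prod_X_mem_monomialsIn {ι : Type*} (u : Finset ι) (f : ι → σ) :
    ∏ i ∈ u, X (f i) ∈ monomialsIn R (Set.range f) :=
  prod_mem fun i _ => X_mem_monomialsIn ⟨i, rfl⟩

theorem prod_X_mem_span_prod_erase {ι : Type*} [Fintype ι] [DecidableEq ι] (f : ι → σ)
    (i : ι) : ∏ t, X (f t) ∈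
      Ideal.span {m : MvPolynomial σ R | ∃ i, m = ∏ t ∈ Finset.univ.erase i, X (f t)} := by
  rw [← Finset.mul_prod_erase Finset.univ _ (Finset.mem_univ i)]
  exact Ideal.mul_mem_left _ _ (Ideal.subset_span ⟨i, rfl⟩)

theorem isMonomialIdealIn_span_prod_erase {ι : Type*} [Fintype ι] [DecidableEq ι] (f : ι → σ) :
    IsMonomialIdealIn R (Set.range f)
      (Ideal.span {m | ∃ i, m = ∏ t ∈ Finset.univ.erase i, X (f t)}) := by
  refine ⟨_, ?_, rfl⟩
  rintro _ ⟨i, rfl⟩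
  exact prod_X_mem_monomialsIn _ f

theorem isMonomialIdealIn_span_monomial_mapDomain {τ : Type*} (f : τ → σ) (B : Set (τ →₀ ℕ)) :
    IsMonomialIdealIn R (Set.range f)
      (Ideal.span ((fun d : τ →₀ ℕ => monomial (d.mapDomain f) (1 : R)) '' B)) := by
  classical
  refine ⟨_, ?_, rfl⟩
  rintro _ ⟨d, -, rfl⟩
  refine ⟨_, ?_, rfl⟩
  exact (Finset.coe_subset.2 Finsupp.mapDomain_support).trans (by simp)

theorem sum_inf_eq_of_isMonomialIdealIn (hst : Disjoint s t) {x y : MvPolynomial σ R}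
    {Ix Iy : Ideal (MvPolynomial σ R)} (hx : x ∈ monomialsIn R s) (hy : y ∈ monomialsIn R t)
    (hIx : IsMonomialIdealIn R s Ix) (hIy : IsMonomialIdealIn R t Iy) (hxIx : x ∈ Ix)
    (hyIy : y ∈ Iy) {k ℓ : ℕ} (hl : 0 < ℓ) (hlk : ℓ ≤ k) :
    (∑ h ∈ Finset.range ℓ,
        Ideal.span {x ^ (k - h)} * Ix ^ h * (Ideal.span {y ^ h} * Iy ^ (k - h))) ⊓
        (Ideal.span {x ^ (k - ℓ)} * Ix ^ ℓ * (Ideal.span {y ^ ℓ} * Iy ^ (k - ℓ))) =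
      Ideal.span {x ^ (k - ℓ + 1)} * Ix ^ (ℓ - 1) * (Ideal.span {y ^ ℓ} * Iy ^ (k - ℓ)) := by
  set A := Ideal.span {x ^ (k - ℓ + 1)} * Ix ^ (ℓ - 1)
  set B := Ideal.span {y ^ ℓ} * Iy ^ (k - ℓ)
  have hA : IsMonomialIdealIn R s A :=
    (IsMonomialIdealIn.span_singleton (pow_mem hx _)).mul (hIx.pow _)
  have hB : IsMonomialIdealIn R t B :=
    (IsMonomialIdealIn.span_singleton (pow_mem hy _)).mul (hIy.pow _)
  apply le_antisymm
  · calc _ ≤ A ⊓ B := by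
          refine inf_le_inf (Finset.sum_induction _ (· ≤ A) (fun _ _ => add_le) bot_le ?_)
            Ideal.mul_le_right
          intro h hh
          have hhl := Finset.mem_range.1 hh
          exact Ideal.mul_le_left.trans
            (Ideal.span_singleton_pow_mul_pow_le hxIx (by omega) (by omega))
      _ = A * B := hA.inf_eq_mul hB hst
  · refine le_inf ?_ ?_
    · refine le_trans ?_ (Finset.single_le_sum (fun _ _ => zero_le)
        (Finset.mem_range.2 (Nat.sub_one_lt_of_lt hl)))
      rw [show k - (ℓ - 1) = k - ℓ + 1 by omega]
      exact Ideal.mul_mono_right (Ideal.span_singleton_pow_mul_pow_le hyIy (by omega) (by omega))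
    · exact Ideal.mul_mono_left (Ideal.span_singleton_pow_mul_pow_le hxIx (by omega) (by omega))

end MvPolynomial

theorem stmt7_general {K : Type*} [Field K] {p q : ℕ} (hp : 1 ≤ p)
    (Ix Iy : Ideal (MvPolynomial (Fin p ⊕ Fin q) K))
    (hIx : Ix = Ideal.span {m | ∃ i : Fin p,
      m = ∏ t ∈ Finset.univ.erase i, X (Sum.inl t)})
    (B : Set (Fin q →₀ ℕ))
    (hIy : Iy = Ideal.span
      ((fun d : Fin q →₀ ℕ => monomial (d.mapDomain Sum.inr) (1 : K)) '' B))
    (hyIy : (∏ j : Fin q, (X (Sum.inr j) : MvPolynomial (Fin p ⊕ Fin q) K)) ∈ Iy)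
    (k ℓ : ℕ) (hl : 0 < ℓ) (hlk : ℓ ≤ k) :
    (∑ h ∈ Finset.range ℓ, Jh K p q Ix Iy k h) ⊓ Jh K p q Ix Iy k ℓ =
      Ideal.span {(∏ i : Fin p, (X (Sum.inl i) : MvPolynomial (Fin p ⊕ Fin q) K))
          ^ (k - ℓ + 1)} * Ix ^ (ℓ - 1) *
        Ideal.span {(∏ j : Fin q, (X (Sum.inr j) : MvPolynomial (Fin p ⊕ Fin q) K)) ^ ℓ} *
        Iy ^ (k - ℓ) := by
  have hJ : ∀ h, Jh K p q Ix Iy k h =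
      Ideal.span {(∏ i : Fin p, X (Sum.inl i)) ^ (k - h)} * Ix ^ h *
        (Ideal.span {(∏ j : Fin q, X (Sum.inr j)) ^ h} * Iy ^ (k - h)) := by
    intro h
    rw [Jh, ← Ideal.span_singleton_mul_span_singleton]
    ring
  rw [Finset.sum_congr rfl fun h _ => hJ h, hJ, mul_assoc _ (Ideal.span _)]
  refine sum_inf_eq_of_isMonomialIdealIn Set.isCompl_range_inl_range_inr.disjoint
    (prod_X_mem_monomialsIn _ _) (prod_X_mem_monomialsIn _ _) ?_ ?_ ?_ hyIy hl hlk
  · exact hIx ▸ isMonomialIdealIn_span_prod_erase _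
  · exact hIy ▸ isMonomialIdealIn_span_monomial_mapDomain _ B
  · exact hIx ▸ prod_X_mem_span_prod_erase _ ⟨0, hp⟩

theorem stmt7 {K : Type*} [Field K] {p q : ℕ} (hp : 1 ≤ p) (hq : 1 ≤ q)
    (Ix Iy : Ideal (MvPolynomial (Fin p ⊕ Fin q) K))
    (hIx : Ix = Ideal.span {m | ∃ i : Fin p,
      m = ∏ t ∈ Finset.univ.erase i, X (Sum.inl t)})
    (B : Set (Fin q →₀ ℕ))
    (hIy : Iy = Ideal.span
      ((fun d : Fin q →₀ ℕ => monomial (d.mapDomain Sum.inr) (1 : K)) '' B))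
    (hyIy : (∏ j : Fin q, (X (Sum.inr j) : MvPolynomial (Fin p ⊕ Fin q) K)) ∈ Iy)
    (k ℓ : ℕ) (hk : 1 ≤ k) (hl : 0 < ℓ) (hlk : ℓ ≤ k) :
    (∑ h ∈ Finset.range ℓ, Jh K p q Ix Iy k h) ⊓ Jh K p q Ix Iy k ℓ =
      Ideal.span {(∏ i : Fin p, (X (Sum.inl i) : MvPolynomial (Fin p ⊕ Fin q) K))
          ^ (k - ℓ + 1)} * Ix ^ (ℓ - 1) *
        Ideal.span {(∏ j : Fin q, (X (Sum.inr j) : MvPolynomial (Fin p ⊕ Fin q) K)) ^ ℓ} *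
        Iy ^ (k - ℓ) :=
  stmt7_general hp Ix Iy hIx B hIy hyIy k ℓ hl hlk
end

section
/- Let H be a finite simple graph on [q] without isolated vertices and let I_y = I_c(H) ⊂ K[y_1,...,y_q] be its complementary edge ideal. Then for all k ≥ ℓ ≥ 1, ∂(y^ℓ I_y^{k−ℓ}) ⊆ y^{ℓ−1} I_y^{k+1−ℓ}, where y = y_1⋯y_q and ∂J denotes the ideal generated by all u/y_i with u a minimal generator of J and y_i dividing u. -/
open MvPolynomial

/-! Pick an edge `{i, j}` of `H` at `i`. Then `y = y_i · (y_j · y / (y_i y_j)) ∈ (y_i) I_y`,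
hence `y^ℓ I_y^m ⊆ y_i · y^{ℓ-1} I_y^{m+1}`. A generator `u` of `y^ℓ I_y^{k-ℓ}` divisible by `y_i`
is therefore `y_i` times an element of `y^{ℓ-1} I_y^{k+1-ℓ}`, and since `y_i` is a nonzerodivisor,
that element is `u / y_i`. -/

/-- The complementary edge ideal `I_c(H) = ((y_1⋯y_q)/(y_i y_j) : {i,j} ∈ E(H))`. -/
noncomputable def compEdgeIdeal (K : Type*) [Field K] (V : Type*) [Fintype V] [DecidableEq V]
    (G : SimpleGraph V) : Ideal (MvPolynomial V K) :=
  Ideal.span {m | ∃ i j, G.Adj i j ∧ m = ∏ t ∈ Finset.univ \ {i, j}, X t}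

/-- `d` is the exponent vector of a minimal monomial generator of the monomial ideal `J`. -/
def IsMinGen {K : Type*} [Field K] {σ : Type*} (J : Ideal (MvPolynomial σ K))
    (d : σ →₀ ℕ) : Prop :=
  monomial d (1 : K) ∈ J ∧
    monomial d (1 : K) ∉ Ideal.span (Set.range (X : σ → MvPolynomial σ K)) * J

theorem Ideal.mem_of_mul_mem_span_singleton_mul {R : Type*} [CommSemiring R] {x p : R}
    {J : Ideal R} (hx : IsLeftRegular x) (h : x * p ∈ Ideal.span {x} * J) : p ∈ J := by
  obtain ⟨z, hz, hzp⟩ := Ideal.mem_span_singleton_mul.mp h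
  exact hx hzp ▸ hz

theorem Ideal.span_singleton_pow_mul_le {R : Type*} [CommSemiring R] {x y : R} {I : Ideal R}
    (hy : y ∈ Ideal.span {x} * I) {ℓ : ℕ} (hℓ : 1 ≤ ℓ) (m : ℕ) :
    Ideal.span {y ^ ℓ} * I ^ m ≤ Ideal.span {x} * (Ideal.span {y ^ (ℓ - 1)} * I ^ (m + 1)) :=
  calc Ideal.span {y ^ ℓ} * I ^ m = Ideal.span {y} * (Ideal.span {y ^ (ℓ - 1)} * I ^ m) := by
        rw [← mul_assoc, Ideal.span_singleton_mul_span_singleton, ← pow_succ',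
          Nat.sub_add_cancel hℓ]
    _ ≤ (Ideal.span {x} * I) * (Ideal.span {y ^ (ℓ - 1)} * I ^ m) :=
        Ideal.mul_mono_left ((Ideal.span_singleton_le_iff_mem _).mpr hy)
    _ = Ideal.span {x} * (Ideal.span {y ^ (ℓ - 1)} * I ^ (m + 1)) := by ring

theorem MvPolynomial.prod_X_eq_X_mul_X_mul_prod_sdiff {R σ : Type*} [CommSemiring R]
    [Fintype σ] [DecidableEq σ] {i j : σ} (hij : i ≠ j) :
    ∏ t, (X t : MvPolynomial σ R) = X i * X j * ∏ t ∈ Finset.univ \ {i, j}, X t := by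
  rw [← Finset.prod_sdiff (Finset.subset_univ {i, j}), Finset.prod_pair hij, mul_comm]

theorem prod_X_mem_span_X_mul_compEdgeIdeal {K V : Type*} [Field K] [Fintype V]
    [DecidableEq V] {G : SimpleGraph V} {i j : V} (hij : G.Adj i j) :
    ∏ t, (X t : MvPolynomial V K) ∈ Ideal.span {X i} * compEdgeIdeal K V G := by
  rw [prod_X_eq_X_mul_X_mul_prod_sdiff hij.ne, mul_assoc]
  exact Ideal.mul_mem_mul (Ideal.mem_span_singleton_self _)
    (Ideal.mul_mem_left _ _ (Ideal.subset_span ⟨i, j, hij, rfl⟩))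

theorem MvPolynomial.monomial_eq_X_mul_monomial_sub_single {R σ : Type*} [CommSemiring R]
    {d : σ →₀ ℕ} {i : σ} (hdi : 1 ≤ d i) (a : R) :
    monomial d a = X i * monomial (d - Finsupp.single i 1) a := by
  conv_lhs => rw [← add_tsub_cancel_of_le (Finsupp.single_le_iff.mpr hdi)]
  rw [monomial_single_add, pow_one]

theorem stmt8_general {K : Type*} [Field K] {q : ℕ} (H : SimpleGraph (Fin q))
    (hiso : ∀ i : Fin q, ∃ j, H.Adj i j)
    (Iy : Ideal (MvPolynomial (Fin q) K)) (hIy : Iy = compEdgeIdeal K (Fin q) H)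
    (k ℓ : ℕ) (h1 : 1 ≤ ℓ)
    (d : Fin q →₀ ℕ) (i : Fin q) (hdi : 1 ≤ d i)
    (hmin : IsMinGen (Ideal.span {(∏ j : Fin q, (X j : MvPolynomial (Fin q) K)) ^ ℓ} *
      Iy ^ (k - ℓ)) d) :
    monomial (d - Finsupp.single i 1) (1 : K) ∈
      Ideal.span {(∏ j : Fin q, (X j : MvPolynomial (Fin q) K)) ^ (ℓ - 1)} *
        Iy ^ (k + 1 - ℓ) := by
  obtain ⟨j, hij⟩ := hiso i
  subst hIy
  have hle := Ideal.span_singleton_pow_mul_le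
    (prod_X_mem_span_X_mul_compEdgeIdeal (K := K) hij) h1 (k - ℓ)
  have hmem := hle hmin.1
  rw [monomial_eq_X_mul_monomial_sub_single hdi] at hmem
  exact Ideal.mul_mono_right (Ideal.pow_le_pow_right (by omega))
    (Ideal.mem_of_mul_mem_span_singleton_mul isRegular_X.left hmem)

/-- For `H` without isolated vertices: `∂(y^ℓ I_y^{k−ℓ}) ⊆ y^{ℓ−1} I_y^{k+1−ℓ}`,
stated generator-wise: dividing a minimal generator by a variable lands in the target. -/
theorem stmt8 {K : Type*} [Field K] {q : ℕ} (H : SimpleGraph (Fin q))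
    (hiso : ∀ i : Fin q, ∃ j, H.Adj i j)
    (Iy : Ideal (MvPolynomial (Fin q) K)) (hIy : Iy = compEdgeIdeal K (Fin q) H)
    (k ℓ : ℕ) (h1 : 1 ≤ ℓ) (h2 : ℓ ≤ k)
    (d : Fin q →₀ ℕ) (i : Fin q) (hdi : 1 ≤ d i)
    (hmin : IsMinGen (Ideal.span {(∏ j : Fin q, (X j : MvPolynomial (Fin q) K)) ^ ℓ} *
      Iy ^ (k - ℓ)) d) :
    monomial (d - Finsupp.single i 1) (1 : K) ∈
      Ideal.span {(∏ j : Fin q, (X j : MvPolynomial (Fin q) K)) ^ (ℓ - 1)} *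
        Iy ^ (k + 1 - ℓ) :=
  stmt8_general H hiso Iy hIy k ℓ h1 d i hdi hmin
end

section
/- Let G be a finite simple graph on [n] (n ≥ 3) with at least one edge, containing a triangle T = {p,q,r}. For each k ≥ 1 let u_k = ((x_1⋯x_n)/(x_p x_q x_r)) · ((x_1⋯x_n)/(x_p x_q))^{k−1}. Then (I_c(G)^k : u_k) = (x_p, x_q, x_r); in particular P_T ∈ Ass(I_c(G)^k) and v_{P_T}(I_c(G)^k) ≤ (n−2)k − 1. -/
set_option maxHeartbeats 1000000

open MvPolynomial

section Aux
set_option linter.unusedSectionVars false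
variable {K : Type*} [Field K] {σ : Type*} [Fintype σ] [DecidableEq σ]

lemma prodX_eq_monomial (s : Finset σ) :
    (∏ t ∈ s, X t : MvPolynomial σ K) = monomial (∑ t ∈ s, Finsupp.single t 1) 1 := by
  rw [monomial_sum_one]
  exact Finset.prod_congr rfl fun t _ => rfl

lemma sumSingle_apply (s : Finset σ) (a : σ) :
    (∑ t ∈ s, Finsupp.single t 1 : σ →₀ ℕ) a = if a ∈ s then 1 else 0 := by
  rw [Finset.sum_apply']
  simp [Finsupp.single_apply]

lemma span_X_isPrime {σ' : Type*} (s : Set σ') :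
    (Ideal.span (X '' s) : Ideal (MvPolynomial σ' K)).IsPrime := by
  classical
  set φ : MvPolynomial σ' K →ₐ[K] MvPolynomial σ' K :=
    aeval (fun t => if t ∈ s then 0 else X t) with hφ
  have key : ∀ (d : σ' →₀ ℕ) (c : K),
      φ (monomial d c) = if ∀ i ∈ s, d i = 0 then monomial d c else 0 := by
    intro d c
    rw [hφ, aeval_monomial]
    split_ifs with h
    · rw [monomial_eq]
      congr 1
      apply Finsupp.prod_congr
      intro i hi
      have his : i ∉ s := fun hs => (Finsupp.mem_support_iff.mp hi) (h i hs)
      simp [his]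
    · push_neg at h
      obtain ⟨i, his, hdi⟩ := h
      rw [Finsupp.prod, Finset.prod_eq_zero (Finsupp.mem_support_iff.mpr hdi)
        (by simp [his, zero_pow hdi])]
      ring
  have hker : Ideal.span (X '' s) =
      RingHom.ker (φ : MvPolynomial σ' K →+* MvPolynomial σ' K) := by
    apply le_antisymm
    · rw [Ideal.span_le]
      rintro _ ⟨i, hi, rfl⟩
      simp [RingHom.mem_ker, hφ, hi]
    · intro f hf
      rw [mem_ideal_span_X_image]
      intro m hm
      by_contra hc
      push_neg at hc
      have h0 : φ f = 0 := hf
      have : coeff m (φ f) = coeff m f := by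
        conv_lhs => rw [f.as_sum, map_sum]
        rw [coeff_sum, Finset.sum_eq_single m
          (fun d _ hdm => by rw [key]; split_ifs
                             · rw [coeff_monomial, if_neg hdm]
                             · simp)
          (fun h => absurd hm h)]
        rw [key, if_pos hc, coeff_monomial, if_pos rfl]
      rw [h0, coeff_zero] at this
      exact MvPolynomial.mem_support_iff.mp hm this.symm
  rw [hker]
  exact RingHom.ker_isPrime _

lemma span_monomial_pow_le (T : Set (σ →₀ ℕ)) (k : ℕ) :
    (Ideal.span ((fun d => monomial d (1 : K)) '' T)) ^ k ≤
      Ideal.span ((fun d => monomial d (1 : K)) ''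
        {d | ∃ e : Fin k → (σ →₀ ℕ), (∀ l, e l ∈ T) ∧ d = ∑ l, e l}) := by
  induction k with
  | zero =>
    rw [pow_zero, Ideal.one_eq_top]
    intro x _
    have h1 : (1 : MvPolynomial σ K) ∈ Ideal.span ((fun d => monomial d (1 : K)) ''
        {d | ∃ e : Fin 0 → (σ →₀ ℕ), (∀ l, e l ∈ T) ∧ d = ∑ l, e l}) := by
      apply Ideal.subset_span
      exact ⟨0, ⟨fun l => l.elim0, fun l => l.elim0, by simp⟩, by simp⟩
    simpa using Ideal.mul_mem_left _ x h1
  | succ k ih =>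
    rw [pow_succ]
    calc (Ideal.span ((fun d => monomial d (1 : K)) '' T)) ^ k *
          Ideal.span ((fun d => monomial d (1 : K)) '' T)
        ≤ Ideal.span ((fun d => monomial d (1 : K)) ''
            {d | ∃ e : Fin k → (σ →₀ ℕ), (∀ l, e l ∈ T) ∧ d = ∑ l, e l}) *
          Ideal.span ((fun d => monomial d (1 : K)) '' T) := Ideal.mul_mono_left ih
      _ ≤ _ := by
          rw [Ideal.span_mul_span']
          apply Ideal.span_mono
          rw [Set.mul_subset_iff]
          rintro _ ⟨a, ⟨e, he, rfl⟩, rfl⟩ _ ⟨b, hb, rfl⟩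
          refine ⟨(∑ l, e l) + b, ⟨Fin.snoc e b, ?_, ?_⟩, ?_⟩
          · intro l
            refine Fin.lastCases ?_ ?_ l
            · simpa using hb
            · intro i; simpa using he i
          · rw [Fin.sum_univ_castSucc]; simp
          · simp [monomial_mul]

end Aux

lemma compEdgeIdeal_eq {K : Type*} [Field K] {σ : Type*} [Fintype σ] [DecidableEq σ]
    (G : SimpleGraph σ) :
    compEdgeIdeal K σ G = Ideal.span ((fun d => monomial d (1 : K)) ''
      {d | ∃ i j, G.Adj i j ∧ d = ∑ t ∈ Finset.univ \ {i, j}, Finsupp.single t 1}) := by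
  unfold compEdgeIdeal
  congr 1
  ext m
  constructor
  · rintro ⟨i, j, h, rfl⟩
    exact ⟨_, ⟨i, j, h, rfl⟩, (prodX_eq_monomial _).symm⟩
  · rintro ⟨_, ⟨i, j, h, rfl⟩, rfl⟩
    exact ⟨i, j, h, (prodX_eq_monomial _).symm⟩

theorem stmt9 {K : Type*} [Field K] {n : ℕ} (hn : 3 ≤ n) (G : SimpleGraph (Fin n))
    (hedge : ∃ a b, G.Adj a b)
    (p q r : Fin n) (hpq : G.Adj p q) (hqr : G.Adj q r) (hpr : G.Adj p r)
    (k : ℕ) (hk : 1 ≤ k) (u : MvPolynomial (Fin n) K)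
    (hu : u = (∏ t ∈ Finset.univ \ {p, q, r}, X t) *
      (∏ t ∈ Finset.univ \ {p, q}, X t) ^ (k - 1)) :
    Submodule.colon ((compEdgeIdeal K (Fin n) G) ^ k) (Ideal.span {u}) =
      Ideal.span {X p, X q, X r} ∧
    Ideal.span {(X p : MvPolynomial (Fin n) K), X q, X r} ∈
      associatedPrimes (MvPolynomial (Fin n) K)
        (MvPolynomial (Fin n) K ⧸ (compEdgeIdeal K (Fin n) G) ^ k) ∧
    ∃ f : MvPolynomial (Fin n) K, f.IsHomogeneous ((n - 2) * k - 1) ∧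
      Submodule.colon ((compEdgeIdeal K (Fin n) G) ^ k) (Ideal.span {f}) =
        Ideal.span {X p, X q, X r} := by
  have hpq' : p ≠ q := hpq.ne
  have hqr' : q ≠ r := hqr.ne
  have hpr' : p ≠ r := hpr.ne
  set I := compEdgeIdeal K (Fin n) G with hI
  -- u as a monomial
  set w : Fin n →₀ ℕ := (∑ t ∈ Finset.univ \ {p, q, r}, Finsupp.single t 1) +
      (k - 1) • (∑ t ∈ Finset.univ \ {p, q}, Finsupp.single t 1) with hw
  have hu' : u = monomial w 1 := by
    rw [hu, prodX_eq_monomial, prodX_eq_monomial, monomial_pow, monomial_mul, one_pow, one_mul]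
  have happ : ∀ a, w a = (if a ∈ Finset.univ \ ({p, q, r} : Finset (Fin n)) then 1 else 0) +
      (k - 1) * (if a ∈ Finset.univ \ ({p, q} : Finset (Fin n)) then 1 else 0) := by
    intro a
    rw [hw, Finsupp.add_apply, Finsupp.smul_apply, sumSingle_apply, sumSingle_apply, smul_eq_mul]
  have hwp : w p = 0 := by rw [happ]; simp
  have hwq : w q = 0 := by rw [happ]; simp
  have hwr : w r = k - 1 := by rw [happ]; simp [Ne.symm hpr', Ne.symm hqr']
  -- the key insertion identity
  have keyins : ∀ (a : Fin n) (s : Finset (Fin n)), a ∉ s →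
      (X a : MvPolynomial (Fin n) K) * ∏ t ∈ Finset.univ \ insert a s, X t =
        ∏ t ∈ Finset.univ \ s, X t := by
    intro a s ha
    rw [show Finset.univ \ s = insert a (Finset.univ \ insert a s) by
      ext t
      rcases eq_or_ne t a with rfl | ht
      · simp [ha]
      · simp [ht], Finset.prod_insert (by simp)]
  have memI : ∀ i j : Fin n, G.Adj i j →
      (∏ t ∈ Finset.univ \ {i, j}, X t : MvPolynomial (Fin n) K) ∈ I :=
    fun i j h => Ideal.subset_span ⟨i, j, h, rfl⟩
  -- main colon computation
  have main : Submodule.colon (I ^ k) (Ideal.span {u}) = Ideal.span {X p, X q, X r} := by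
    apply le_antisymm
    · intro f hf
      have hfu : f * u ∈ I ^ k := Ideal.mem_colon_span_singleton.mp hf
      have hfu' : f * u ∈ Ideal.span ((fun d => monomial d (1 : K)) ''
          {d | ∃ e : Fin k → (Fin n →₀ ℕ),
            (∀ l, e l ∈ {d | ∃ i j, G.Adj i j ∧
              d = ∑ t ∈ Finset.univ \ {i, j}, Finsupp.single t 1}) ∧ d = ∑ l, e l}) := by
        apply span_monomial_pow_le _ k
        rwa [← compEdgeIdeal_eq]
      rw [mem_ideal_span_monomial_image] at hfu'
      have himg : ({X p, X q, X r} : Set (MvPolynomial (Fin n) K)) =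
          X '' ({p, q, r} : Set (Fin n)) := by
        simp [Set.image_insert_eq]
      rw [himg, mem_ideal_span_X_image]
      intro m hm
      by_contra hcon
      push_neg at hcon
      have hmp : m p = 0 := hcon p (by simp)
      have hmq : m q = 0 := hcon q (by simp)
      have hmr : m r = 0 := hcon r (by simp)
      have hsupp : m + w ∈ (f * u).support := by
        rw [MvPolynomial.mem_support_iff, hu', coeff_mul_monomial, mul_one]
        exact MvPolynomial.mem_support_iff.mp hm
      obtain ⟨d, ⟨e, he, rfl⟩, hle⟩ := hfu' _ hsupp
      have hle' : ∀ a, (∑ l, e l) a ≤ m a + w a := fun a => by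
        simpa using (Finsupp.le_def.mp hle) a
      have heval : ∀ (l : Fin k) (a : Fin n),
          ∃ i j, G.Adj i j ∧ (e l) a = if a ∈ Finset.univ \ ({i, j} : Finset (Fin n)) then 1 else 0 := by
        intro l a
        obtain ⟨i, j, hij, hel⟩ := he l
        exact ⟨i, j, hij, by rw [hel, sumSingle_apply]⟩
      -- for each l, p and q must be in the edge, hence r is not
      have her : ∀ l : Fin k, (e l) r = 1 := by
        intro l
        obtain ⟨i, j, hij, hel⟩ := he l
        have hp0 : (e l) p = 0 := by
          have := hle' p
          rw [Finset.sum_apply'] at this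
          have h0 : ∑ l', (e l') p = 0 := by omega
          exact Finset.sum_eq_zero_iff.mp h0 l (Finset.mem_univ l)
        have hq0 : (e l) q = 0 := by
          have := hle' q
          rw [Finset.sum_apply'] at this
          have h0 : ∑ l', (e l') q = 0 := by omega
          exact Finset.sum_eq_zero_iff.mp h0 l (Finset.mem_univ l)
        rw [hel, sumSingle_apply] at hp0 hq0 ⊢
        have hpmem : p ∈ ({i, j} : Finset (Fin n)) := by
          by_contra h; simp [h] at hp0
        have hqmem : q ∈ ({i, j} : Finset (Fin n)) := by
          by_contra h; simp [h] at hq0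
        simp only [Finset.mem_insert, Finset.mem_singleton] at hpmem hqmem
        have hij' : i ≠ j := hij.ne
        have hrmem : r ∉ ({i, j} : Finset (Fin n)) := by
          simp only [Finset.mem_insert, Finset.mem_singleton]
          push_neg
          rcases hpmem with h1 | h1 <;> rcases hqmem with h2 | h2
          · exact absurd (h1.trans h2.symm) hpq'
          · constructor
            · rw [← h1]; exact Ne.symm hpr'
            · rw [← h2]; exact Ne.symm hqr'
          · constructor
            · rw [← h2]; exact Ne.symm hqr'
            · rw [← h1]; exact Ne.symm hpr'
          · exact absurd (h1.trans h2.symm) hpq'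
        simp [hrmem]
      have hsumr := hle' r
      rw [Finset.sum_apply'] at hsumr
      have hck : ∑ l : Fin k, (e l) r = k := by
        rw [Finset.sum_congr rfl fun l _ => her l]
        simp
      rw [hck, hmr, hwr] at hsumr
      omega
    · rw [Ideal.span_le]
      rintro x hx
      simp only [Set.mem_insert_iff, Set.mem_singleton_iff] at hx
      have hxmem : x * u ∈ I ^ k := by
        rcases hx with rfl | rfl | rfl
        · have h1 : (X p : MvPolynomial (Fin n) K) * ∏ t ∈ Finset.univ \ {p, q, r}, X t =
              ∏ t ∈ Finset.univ \ {q, r}, X t := keyins p {q, r} (by simp [hpq', hpr'])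
          rw [hu, ← mul_assoc, h1]
          have h2 := Ideal.mul_mem_mul (memI q r hqr) (Ideal.pow_mem_pow (memI p q hpq) (k - 1))
          rwa [← pow_succ', show k - 1 + 1 = k by omega] at h2
        · have hset : ({p, q, r} : Finset (Fin n)) = insert q {p, r} := by
            ext t; simp; tauto
          have h1 : (X q : MvPolynomial (Fin n) K) * ∏ t ∈ Finset.univ \ {p, q, r}, X t =
              ∏ t ∈ Finset.univ \ {p, r}, X t := by
            rw [hset]; exact keyins q {p, r} (by simp [Ne.symm hpq', hqr'])
          rw [hu, ← mul_assoc, h1]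
          have h2 := Ideal.mul_mem_mul (memI p r hpr) (Ideal.pow_mem_pow (memI p q hpq) (k - 1))
          rwa [← pow_succ', show k - 1 + 1 = k by omega] at h2
        · have hset : ({p, q, r} : Finset (Fin n)) = insert r {p, q} := by
            ext t; simp; tauto
          have h1 : (X r : MvPolynomial (Fin n) K) * ∏ t ∈ Finset.univ \ {p, q, r}, X t =
              ∏ t ∈ Finset.univ \ {p, q}, X t := by
            rw [hset]; exact keyins r {p, q} (by simp [Ne.symm hpr', Ne.symm hqr'])
          rw [hu, ← mul_assoc, h1, ← pow_succ', show k - 1 + 1 = k by omega]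
          exact Ideal.pow_mem_pow (memI p q hpq) _
      exact Ideal.mem_colon_span_singleton.mpr hxmem
  have hP : (Ideal.span {X p, X q, X r} : Ideal (MvPolynomial (Fin n) K)).IsPrime := by
    have himg : ({X p, X q, X r} : Set (MvPolynomial (Fin n) K)) =
        X '' ({p, q, r} : Set (Fin n)) := by
      simp [Set.image_insert_eq]
    rw [himg]
    exact span_X_isPrime _
  refine ⟨main, ⟨hP, Submodule.Quotient.mk u, ?_⟩, ⟨u, ?_, main⟩⟩
  · have hcol : (⊥ : Submodule (MvPolynomial (Fin n) K) (MvPolynomial (Fin n) K ⧸ I ^ k)).colon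
        {Submodule.Quotient.mk u} = Ideal.span {X p, X q, X r} := by
      ext f
      rw [Submodule.mem_colon_singleton, Submodule.mem_bot, ← Submodule.Quotient.mk_smul,
        Submodule.Quotient.mk_eq_zero, smul_eq_mul, ← Ideal.mem_colon_span_singleton, main]
    rw [hcol, hP.radical]
  · rw [hu]
    have hc3 : (Finset.univ \ ({p, q, r} : Finset (Fin n))).card = n - 3 := by
      rw [Finset.card_sdiff_of_subset (Finset.subset_univ _), Finset.card_univ, Fintype.card_fin]
      congr 1
      rw [Finset.card_insert_of_notMem (by simp [hpq', hpr']),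
        Finset.card_insert_of_notMem (by simp [hqr']), Finset.card_singleton]
    have hc2 : (Finset.univ \ ({p, q} : Finset (Fin n))).card = n - 2 := by
      rw [Finset.card_sdiff_of_subset (Finset.subset_univ _), Finset.card_univ, Fintype.card_fin]
      congr 1
      rw [Finset.card_insert_of_notMem (by simp [hpq']), Finset.card_singleton]
    have h3 : (∏ t ∈ Finset.univ \ ({p, q, r} : Finset (Fin n)), X t :
        MvPolynomial (Fin n) K).IsHomogeneous (n - 3) := by
      rw [← hc3, show (Finset.univ \ ({p, q, r} : Finset (Fin n))).card =
          ∑ t ∈ Finset.univ \ ({p, q, r} : Finset (Fin n)), 1 by simp]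
      exact IsHomogeneous.prod _ _ _ fun i _ => isHomogeneous_X K i
    have h2 : (∏ t ∈ Finset.univ \ ({p, q} : Finset (Fin n)), X t :
        MvPolynomial (Fin n) K).IsHomogeneous (n - 2) := by
      rw [← hc2, show (Finset.univ \ ({p, q} : Finset (Fin n))).card =
          ∑ t ∈ Finset.univ \ ({p, q} : Finset (Fin n)), 1 by simp]
      exact IsHomogeneous.prod _ _ _ fun i _ => isHomogeneous_X K i
    have heq : (n - 2) * k - 1 = (n - 3) + (n - 2) * (k - 1) := by
      obtain ⟨a, rfl⟩ : ∃ a, n = a + 3 := ⟨n - 3, by omega⟩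
      obtain ⟨b, rfl⟩ : ∃ b, k = b + 1 := ⟨k - 1, by omega⟩
      have e1 : a + 3 - 2 = a + 1 := by omega
      have e2 : a + 3 - 3 = a := by omega
      have e3 : b + 1 - 1 = b := by omega
      rw [e1, e2, e3, Nat.mul_succ]
      set c := (a + 1) * b
      omega
    rw [heq]
    exact h3.mul (h2.pow _)
end

section
/- Let G be a finite simple graph on [n] containing vertices p, q, r with {p,q}, {q,r} ∈ E(G) and {p,r} ∉ E(G). For each k ≥ 1 let u_k = ((x_1⋯x_n)/(x_p x_q x_r)) · ((x_1⋯x_n)/(x_p x_q))^{k−1}. Then (I_c(G)^k : u_k) = (x_p, x_r). -/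
open MvPolynomial

section Aux
variable {K : Type*} [Field K] {n : ℕ} (p r : Fin n)

/-- The substitution killing `X p` and `X r`. -/
noncomputable def phi0 : MvPolynomial (Fin n) K →ₐ[K] MvPolynomial (Fin n) K :=
  aeval (fun t => if t = p then 0 else if t = r then 0 else X t)

lemma sub_phi0_mem (f : MvPolynomial (Fin n) K) :
    f - phi0 p r f ∈ Ideal.span {X p, X r} := by
  have hp : (X p : MvPolynomial (Fin n) K) ∈ Ideal.span {X p, X r} :=
    Ideal.subset_span (by simp)
  have hr : (X r : MvPolynomial (Fin n) K) ∈ Ideal.span {X p, X r} :=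
    Ideal.subset_span (by simp)
  induction f using MvPolynomial.induction_on with
  | C a => simp [phi0]
  | add f g hf hg =>
      have : f + g - phi0 p r (f + g) = (f - phi0 p r f) + (g - phi0 p r g) := by
        rw [map_add]; ring
      rw [this]; exact add_mem hf hg
  | mul_X f i hf =>
      rw [map_mul]
      by_cases hip : i = p
      · have h1 : phi0 (K := K) p r (X i) = 0 := by rw [hip]; simp [phi0]
        rw [h1, mul_zero, sub_zero, hip]
        exact Ideal.mul_mem_left _ _ hp
      · by_cases hir : i = r
        · have h1 : phi0 (K := K) p r (X i) = 0 := by rw [hir]; simp [phi0]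
          rw [h1, mul_zero, sub_zero, hir]
          exact Ideal.mul_mem_left _ _ hr
        · have : phi0 (K := K) p r (X i) = X i := by simp [phi0, hip, hir]
          rw [this]
          have e : f * X i - phi0 p r f * X i = (f - phi0 p r f) * X i := by ring
          rw [e]
          exact Ideal.mul_mem_right _ _ hf

lemma phi0_idem (f : MvPolynomial (Fin n) K) : phi0 p r (phi0 p r f) = phi0 p r f := by
  have : (phi0 p r (K := K)).comp (phi0 p r) = phi0 p r := by
    apply MvPolynomial.algHom_ext
    intro i
    by_cases hip : i = p
    · simp [phi0, hip]
    · by_cases hir : i = r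
      · simp [phi0, hip, hir]
      · simp [phi0, hip, hir]
  exact AlgHom.congr_fun this f

/-- The map to `Polynomial (MvPolynomial (Fin n) K)` : `X p ↦ 0`, `X r ↦ Y`, `X t ↦ C (X t)`. -/
noncomputable def psi : MvPolynomial (Fin n) K →ₐ[K] Polynomial (MvPolynomial (Fin n) K) :=
  aeval (fun t => if t = p then 0 else if t = r then Polynomial.X else Polynomial.C (X t))

lemma psi_phi0 (f : MvPolynomial (Fin n) K) :
    psi p r (phi0 p r f) = Polynomial.C (phi0 p r f) := by
  have : (psi p r (K := K)).comp (phi0 p r) =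
      (Polynomial.CAlgHom).comp (phi0 p r) := by
    apply MvPolynomial.algHom_ext
    intro i
    by_cases hip : i = p
    · simp [phi0, psi, hip]
    · by_cases hir : i = r
      · simp [phi0, psi, hip, hir]
      · simp [phi0, psi, hip, hir, Polynomial.CAlgHom]
  have h2 := AlgHom.congr_fun this f
  simpa [Polynomial.CAlgHom] using h2

end Aux

theorem stmt10 {K : Type*} [Field K] {n : ℕ} (hn : 3 ≤ n) (G : SimpleGraph (Fin n))
    (p q r : Fin n) (hpr' : p ≠ r)
    (hpq : G.Adj p q) (hqr : G.Adj q r) (hpr : ¬ G.Adj p r)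
    (k : ℕ) (hk : 1 ≤ k) (u : MvPolynomial (Fin n) K)
    (hu : u = (∏ t ∈ Finset.univ \ {p, q, r}, X t) *
      (∏ t ∈ Finset.univ \ {p, q}, X t) ^ (k - 1)) :
    Submodule.colon ((compEdgeIdeal K (Fin n) G) ^ k) (Ideal.span {u}) =
      Ideal.span {X p, X r} := by
  have hpq' : p ≠ q := hpq.ne
  have hqr' : q ≠ r := hqr.ne
  set I := compEdgeIdeal K (Fin n) G with hI
  set a : MvPolynomial (Fin n) K := ∏ t ∈ Finset.univ \ {p, q, r}, X t with ha
  set b : MvPolynomial (Fin n) K := ∏ t ∈ Finset.univ \ {p, q}, X t with hb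
  set c : MvPolynomial (Fin n) K := ∏ t ∈ Finset.univ \ {q, r}, X t with hc
  -- b and c as generators of I
  have hbI : b ∈ I := Ideal.subset_span ⟨p, q, hpq, rfl⟩
  have hcI : c ∈ I := Ideal.subset_span ⟨q, r, hqr, rfl⟩
  -- splitting off variables
  have hset1 : (Finset.univ \ {p, q} : Finset (Fin n)).erase r = Finset.univ \ {p, q, r} := by
    ext t
    simp only [Finset.mem_erase, Finset.mem_sdiff, Finset.mem_univ, Finset.mem_insert,
      Finset.mem_singleton, true_and]
    tauto
  have hset2 : (Finset.univ \ {q, r} : Finset (Fin n)).erase p = Finset.univ \ {p, q, r} := by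
    ext t
    simp only [Finset.mem_erase, Finset.mem_sdiff, Finset.mem_univ, Finset.mem_insert,
      Finset.mem_singleton, true_and]
    tauto
  have hrmem : r ∈ (Finset.univ \ {p, q} : Finset (Fin n)) := by
    simp [hpr'.symm, hqr'.symm]
  have hpmem : p ∈ (Finset.univ \ {q, r} : Finset (Fin n)) := by
    simp [hpq', hpr']
  have hXrb : X r * a = b := by
    rw [ha, hb, ← Finset.mul_prod_erase _ _ hrmem, hset1]
  have hXpc : X p * a = c := by
    rw [ha, hc, ← Finset.mul_prod_erase _ _ hpmem, hset2]
  -- u * X r and u * X p in I ^ k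
  have hk' : k - 1 + 1 = k := Nat.succ_pred_eq_of_pos hk
  have hXr : X r * u ∈ I ^ k := by
    rw [hu, ← mul_assoc, hXrb, ← pow_succ', hk']
    exact Ideal.pow_mem_pow hbI k
  have hXp : X p * u ∈ I ^ k := by
    rw [hu, ← mul_assoc, hXpc]
    have : I ^ k = I * I ^ (k - 1) := by rw [← pow_succ', hk']
    rw [this]
    exact Ideal.mul_mem_mul hcI (Ideal.pow_mem_pow hbI (k - 1))
  -- reverse inclusion
  have hrev : Ideal.span {X p, X r} ≤
      Submodule.colon (I ^ k) (Ideal.span {u}) := by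
    rw [Ideal.span_le]
    rintro m hm
    simp only [Set.mem_insert_iff, Set.mem_singleton_iff] at hm
    rcases hm with rfl | rfl
    · exact Submodule.mem_colon_span_singleton.mpr (by rw [smul_eq_mul]; exact hXp)
    · exact Submodule.mem_colon_span_singleton.mpr (by rw [smul_eq_mul]; exact hXr)
  refine le_antisymm ?_ hrev
  intro f hf
  replace hf : f * u ∈ I ^ k := by
    have := Submodule.mem_colon_span_singleton.mp hf
    rwa [smul_eq_mul] at this
  -- reduce to phi0 f
  set f0 : MvPolynomial (Fin n) K := phi0 p r f with hf0def
  have hsub : f - f0 ∈ Ideal.span {X p, X r} := sub_phi0_mem p r f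
  have hsubu : (f - f0) * u ∈ I ^ k := by
    have h3 := Submodule.mem_colon_span_singleton.mp (hrev hsub)
    rwa [smul_eq_mul] at h3
  have hf0u : f0 * u ∈ I ^ k := by
    have : f0 * u = f * u - (f - f0) * u := by ring
    rw [this]; exact sub_mem hf hsubu
  -- now push through psi
  set Ψ := psi (K := K) p r with hΨ
  have hmapI : Ideal.map Ψ.toRingHom I ≤ Ideal.span {Polynomial.X} := by
    rw [hI, compEdgeIdeal, Ideal.map_span, Ideal.span_le]
    rintro _ ⟨m, ⟨i, j, hij, rfl⟩, rfl⟩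
    by_cases hrij : r ∈ ({i, j} : Finset (Fin n))
    · -- then p ∉ {i,j}, the product contains X p ↦ 0
      have hpij : p ∉ ({i, j} : Finset (Fin n)) := by
        intro hpij
        apply hpr
        simp only [Finset.mem_insert, Finset.mem_singleton] at hpij hrij
        rcases hpij with rfl | rfl <;> rcases hrij with rfl | rfl
        · exact absurd rfl hpr'
        · exact hij
        · exact hij.symm
        · exact absurd rfl hpr'
      have hpmem' : p ∈ Finset.univ \ ({i, j} : Finset (Fin n)) := by
        simp [hpij]
      rw [AlgHom.toRingHom_eq_coe, RingHom.coe_coe, map_prod]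
      rw [Finset.prod_eq_zero hpmem' (by simp [hΨ, psi])]
      exact Ideal.zero_mem _
    · -- r ∉ {i,j}, pull out the factor Ψ (X r) = Y
      have hrmem' : r ∈ Finset.univ \ ({i, j} : Finset (Fin n)) := by
        simp only [Finset.mem_sdiff, Finset.mem_univ, true_and]
        exact hrij
      rw [AlgHom.toRingHom_eq_coe, RingHom.coe_coe, map_prod,
        ← Finset.mul_prod_erase _ _ hrmem']
      have : Ψ (X r) = Polynomial.X := by simp [hΨ, psi, hpr'.symm]
      rw [this]
      exact Ideal.mul_mem_right _ _ (Ideal.subset_span rfl)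
  have hmem : Ψ (f0 * u) ∈ Ideal.span {Polynomial.X ^ k} := by
    have h1 : Ψ (f0 * u) ∈ Ideal.map Ψ.toRingHom (I ^ k) :=
      Ideal.mem_map_of_mem _ hf0u
    rw [Ideal.map_pow] at h1
    have h2 : Ideal.map Ψ.toRingHom I ^ k ≤ Ideal.span {Polynomial.X} ^ k :=
      Ideal.pow_right_mono hmapI k
    rw [Ideal.span_singleton_pow] at h2
    exact h2 h1
  -- compute Ψ (f0 * u)
  have hΨa : Ψ a = Polynomial.C a := by
    rw [ha, map_prod]
    rw [show (Polynomial.C (∏ t ∈ Finset.univ \ ({p, q, r} : Finset (Fin n)), X t)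
        : Polynomial (MvPolynomial (Fin n) K)) = ∏ t ∈ Finset.univ \ {p, q, r},
        Polynomial.C (X t) from (map_prod Polynomial.C _ _)]
    apply Finset.prod_congr rfl
    intro t ht
    simp only [Finset.mem_sdiff, Finset.mem_univ, Finset.mem_insert, Finset.mem_singleton,
      true_and, not_or] at ht
    simp [hΨ, psi, ht.1, ht.2.2]
  have hΨb : Ψ b = Polynomial.X * Polynomial.C a := by
    rw [← hXrb, map_mul, hΨa]
    have : Ψ (X r) = Polynomial.X := by simp [hΨ, psi, hpr'.symm]
    rw [this]
  have hΨf0 : Ψ f0 = Polynomial.C f0 := by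
    rw [hf0def, psi_phi0, ← phi0_idem]
  have hΨcalc : Ψ (f0 * u) = Polynomial.C (f0 * a ^ k) * Polynomial.X ^ (k - 1) := by
    rw [hu, map_mul, map_mul, map_pow, hΨa, hΨb, hΨf0, mul_pow]
    rw [show f0 * a ^ k = f0 * (a * a ^ (k - 1)) by rw [← pow_succ', hk']]
    simp only [map_mul, Polynomial.C_pow]
    ring
  rw [hΨcalc, Ideal.mem_span_singleton'] at hmem
  obtain ⟨g, hg⟩ := hmem
  have hco := congrArg (fun P => Polynomial.coeff P (k - 1)) hg
  simp only [Polynomial.coeff_mul_X_pow'] at hco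
  rw [if_neg (by omega : ¬ k ≤ k - 1), if_pos le_rfl, Nat.sub_self,
    Polynomial.coeff_C_zero] at hco
  -- hco : 0 = f0 * a ^ k
  have hane : a ≠ 0 := by
    rw [ha]
    apply Finset.prod_ne_zero_iff.mpr
    intro t _
    exact MvPolynomial.X_ne_zero t
  have hf00 : f0 = 0 := by
    rcases mul_eq_zero.mp hco.symm with h | h
    · exact h
    · exact absurd h (pow_ne_zero _ hane)
  have : f = f - f0 := by rw [hf00, sub_zero]
  rw [this]
  exact hsub
end

section
/- Let G be a finite simple graph on [n] with an isolated vertex i and at least one edge e ∈ E(G). For each k ≥ 1 let u_k = (∏_{j∈[n]∖e} x_j)^k / x_i. Then (I_c(G)^k : u_k) = (x_i). -/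
/-!
Write `w = ∏_{j ∉ e ∪ {i}} x_j`, so that `u_k = x_i^(k-1) w^k` and `x_i w` is the generator of
`I_c(G)` attached to the edge `e`. Since `i` is isolated, `x_i` divides every generator, so
`I_c(G)^k ⊆ (x_i^k)`. Then `x_i u_k = (x_i w)^k ∈ I_c(G)^k`, and conversely `f u_k ∈ (x_i^k)`
gives `x_i ∣ f w^k`, hence `x_i ∣ f` because `x_i` is prime and does not divide `w`.
-/

open MvPolynomial

theorem Ideal.colon_pow_span_singleton_eq_span_prime {R : Type*} [CommRing R] [IsDomain R]
    {I : Ideal R} {p w : R} (hp : Prime p) (hI : I ≤ Ideal.span {p}) (hpw : p * w ∈ I)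
    (hw : ¬ p ∣ w) (m : ℕ) :
    Submodule.colon (I ^ (m + 1)) (Ideal.span {p ^ m * w ^ (m + 1)}) = Ideal.span {p} := by
  apply le_antisymm
  · intro f hf
    have hfu : f * (p ^ m * w ^ (m + 1)) ∈ I ^ (m + 1) := by
      simpa using Submodule.mem_colon.mp hf _ (Ideal.mem_span_singleton_self _)
    have hdvd : p ^ m * p ∣ p ^ m * (f * w ^ (m + 1)) := by
      rw [← pow_succ, ← Ideal.mem_span_singleton, ← Ideal.span_singleton_pow]
      exact Ideal.pow_right_mono hI _ (by rwa [mul_left_comm] at hfu)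
    have hpf : p ∣ f * w ^ (m + 1) := (mul_dvd_mul_iff_left (pow_ne_zero _ hp.ne_zero)).mp hdvd
    rw [Ideal.mem_span_singleton]
    exact (hp.dvd_or_dvd hpf).resolve_right fun h => hw (hp.dvd_of_dvd_pow h)
  · rw [Ideal.span_le, Set.singleton_subset_iff, SetLike.mem_coe, Submodule.mem_colon]
    intro x hx
    obtain ⟨c, rfl⟩ := Ideal.mem_span_singleton'.mp hx
    have hpu : p • (c * (p ^ m * w ^ (m + 1))) = c * (p * w) ^ (m + 1) := by
      rw [smul_eq_mul]; ring
    rw [hpu]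
    exact Ideal.mul_mem_left _ _ (Ideal.pow_mem_pow hpw _)

theorem compEdgeIdeal_le_span_X_of_isolated {K V : Type*} [Field K] [Fintype V] [DecidableEq V]
    {G : SimpleGraph V} {i : V} (hiso : ∀ j, ¬ G.Adj i j) :
    compEdgeIdeal K V G ≤ Ideal.span {X i} := by
  rw [compEdgeIdeal, Ideal.span_le]
  rintro _ ⟨p, q, hpq, rfl⟩
  refine Ideal.mem_span_singleton.mpr (Finset.dvd_prod_of_mem _ ?_)
  simp only [Finset.mem_sdiff, Finset.mem_univ, Finset.mem_insert, Finset.mem_singleton,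
    true_and, not_or]
  exact ⟨fun h => hiso q (h ▸ hpq), fun h => hiso p (h ▸ hpq.symm)⟩

theorem MvPolynomial.X_dvd_prod_X_iff {R σ : Type*} [CommRing R] [IsDomain R] {i : σ}
    {s : Finset σ} : (X i : MvPolynomial σ R) ∣ ∏ t ∈ s, X t ↔ i ∈ s := by
  simp [X_prime.dvd_finsetProd_iff]

/-- If `i` is an isolated vertex of `G` and `e = {a,b}` is an edge, then with
`u_k = (∏_{j∉e} x_j)^k / x_i = x_i^{k−1} (∏_{j∉e∪{i}} x_j)^k` one has
`(I_c(G)^k : u_k) = (x_i)`. -/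
theorem stmt11 {K : Type*} [Field K] {n : ℕ} (G : SimpleGraph (Fin n))
    (i : Fin n) (hiso : ∀ j, ¬ G.Adj i j)
    (a b : Fin n) (hab : G.Adj a b)
    (k : ℕ) (hk : 1 ≤ k) (u : MvPolynomial (Fin n) K)
    (hu : u = X i ^ (k - 1) * (∏ t ∈ Finset.univ \ {a, b, i}, X t) ^ k) :
    Submodule.colon ((compEdgeIdeal K (Fin n) G) ^ k) (Ideal.span {u}) =
      Ideal.span {X i} := by
  obtain ⟨m, rfl⟩ := Nat.exists_eq_add_of_le' hk
  have hia : i ≠ a := by rintro rfl; exact hiso b hab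
  have hib : i ≠ b := by rintro rfl; exact hiso a hab.symm
  have hedge : (X i : MvPolynomial (Fin n) K) * ∏ t ∈ Finset.univ \ {a, b, i}, X t =
      ∏ t ∈ Finset.univ \ {a, b}, X t := by
    rw [← Finset.prod_insert (by simp)]
    congr 1
    ext t
    by_cases ht : t = i <;> simp [ht, hia, hib]
  rw [hu, Nat.add_sub_cancel]
  refine Ideal.colon_pow_span_singleton_eq_span_prime X_prime
    (compEdgeIdeal_le_span_X_of_isolated hiso) ?_ (by simp [X_dvd_prod_X_iff]) m
  rw [hedge]
  exact Ideal.subset_span ⟨a, b, hab, rfl⟩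
end

section
/- Let G = tK_2 with t ≥ 2 be the graph on [2t] with edges {1,2},{3,4},...,{2t−1,2t}, and let I = I_c(G). For every k ≥ 1, every minimal monomial generator v of I^k satisfies that deg_{x_1}(v) + deg_{x_2}(v) is even. Consequently, there is no monomial u of degree (2t−2)k − 1 such that (I^k : u) is a monomial prime ideal; i.e., v(I_c(tK_2)^k) ≥ (2t−2)k. -/
open MvPolynomial

/-- The graph `tK_2` on vertex set `Fin (2t)` with edges `{0,1},{2,3},…,{2t−2,2t−1}`. -/
def tK2 (t : ℕ) : SimpleGraph (Fin (2 * t)) where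
  Adj a b := a ≠ b ∧ a.val / 2 = b.val / 2
  symm := ⟨by intro a b h; exact ⟨h.1.symm, h.2.symm⟩⟩
  loopless := ⟨by intro a h; exact h.1 rfl⟩

namespace Stmt12Aux

/-! ### Generic lemmas on exponent vectors -/

/-- degree of an exponent vector -/
def deg {σ : Type*} (f : σ →₀ ℕ) : ℕ := f.sum fun _ e => e

lemma deg_add {σ : Type*} (f g : σ →₀ ℕ) : deg (f + g) = deg f + deg g :=
  Finsupp.sum_add_index' (fun _ => rfl) (fun _ _ _ => rfl)

lemma deg_single {σ : Type*} (a : σ) (n : ℕ) : deg (Finsupp.single a n) = n :=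
  Finsupp.sum_single_index rfl

lemma eq_zero_of_deg_eq_zero {σ : Type*} {f : σ →₀ ℕ} (h : deg f = 0) : f = 0 := by
  ext a
  by_cases ha : f a = 0
  · simp [ha]
  · exact absurd ((Finset.sum_eq_zero_iff.mp h) a (Finsupp.mem_support_iff.mpr ha)) ha

lemma eq_of_le_of_deg_eq {σ : Type*} {s v : σ →₀ ℕ} (h : s ≤ v) (hd : deg s = deg v) :
    s = v := by
  have h1 : v - s + s = v := tsub_add_cancel_of_le h
  have h2 : deg (v - s) + deg s = deg v := by rw [← deg_add, h1]
  have h3 : v - s = 0 := eq_zero_of_deg_eq_zero (by omega)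
  rw [← h1, h3, zero_add]

lemma prod_X_eq_monomial {σ : Type*} [DecidableEq σ] {K : Type*} [CommSemiring K]
    (A : Finset σ) :
    (∏ a ∈ A, (X a : MvPolynomial σ K)) = monomial (∑ a ∈ A, Finsupp.single a 1) 1 := by
  classical
  induction A using Finset.induction with
  | empty => simp
  | @insert a s ha ih =>
    rw [Finset.prod_insert ha, Finset.sum_insert ha, ih, X, monomial_mul, one_mul]

lemma span_monomial_mul {σ : Type*} {K : Type*} [Field K] (A B : Set (σ →₀ ℕ)) :
    Ideal.span ((fun s => monomial s (1 : K)) '' A) *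
      Ideal.span ((fun s => monomial s (1 : K)) '' B) =
    Ideal.span ((fun s => monomial s (1 : K)) '' Set.image2 (· + ·) A B) := by
  rw [Ideal.span_mul_span]
  congr 1
  rw [Set.image_image2]
  ext m
  simp only [Set.mem_iUnion, Set.mem_image, Set.mem_image2, Set.mem_singleton_iff]
  constructor
  · rintro ⟨x, ⟨a, ha, rfl⟩, y, ⟨b, hb, rfl⟩, rfl⟩
    exact ⟨a, ha, b, hb, by beta_reduce; rw [monomial_mul, one_mul]⟩
  · rintro ⟨a, ha, b, hb, rfl⟩
    exact ⟨monomial a 1, ⟨a, ha, rfl⟩, monomial b 1, ⟨b, hb, rfl⟩, by beta_reduce; rw [monomial_mul, one_mul]⟩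

/-! ### The exponent vectors of the generators -/

noncomputable def pgen (t : ℕ) (j : Fin t) : Fin (2 * t) →₀ ℕ :=
  ∑ a ∈ Finset.univ \ {⟨2 * j.val, by have := j.isLt; omega⟩,
      ⟨2 * j.val + 1, by have := j.isLt; omega⟩}, Finsupp.single a 1

lemma sum_single_apply {t : ℕ} (A : Finset (Fin t)) (a : Fin t) :
    (∑ x ∈ A, Finsupp.single x (1 : ℕ)) a = if a ∈ A then 1 else 0 := by
  classical
  rw [Finsupp.finset_sum_apply]
  simp [Finsupp.single_apply]

lemma pgen_apply {t : ℕ} (j : Fin t) (a : Fin (2 * t)) :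
    pgen t j a = if a.val = 2 * j.val ∨ a.val = 2 * j.val + 1 then 0 else 1 := by
  rw [pgen, sum_single_apply]
  have hj := j.isLt
  by_cases h : a.val = 2 * j.val ∨ a.val = 2 * j.val + 1
  · rw [if_neg, if_pos h]
    simp only [Finset.mem_sdiff, Finset.mem_univ, Finset.mem_insert, Finset.mem_singleton,
      true_and, not_not]
    rcases h with h | h
    · exact Or.inl (Fin.ext h)
    · exact Or.inr (Fin.ext h)
  · rw [if_pos, if_neg h]
    simp only [Finset.mem_sdiff, Finset.mem_univ, Finset.mem_insert, Finset.mem_singleton,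
      true_and]
    push_neg at h ⊢
    exact ⟨fun he => h.1 (congrArg Fin.val he), fun he => h.2 (congrArg Fin.val he)⟩

lemma deg_pgen {t : ℕ} (j : Fin t) : deg (pgen t j) = 2 * t - 2 := by
  have hj := j.isLt
  have h1 : deg (pgen t j) =
      ∑ a ∈ Finset.univ \ {(⟨2 * j.val, by omega⟩ : Fin (2*t)),
        (⟨2 * j.val + 1, by omega⟩ : Fin (2*t))}, deg (Finsupp.single a (1:ℕ)) := by
    rw [pgen, deg]
    exact (Finsupp.sum_finset_sum_index (h := fun _ e => e) (fun _ => rfl)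
      (fun _ _ _ => rfl)).symm
  rw [h1]
  rw [Finset.sum_congr rfl (fun a _ => deg_single a 1), Finset.sum_const, smul_eq_mul, mul_one]
  rw [Finset.card_sdiff_of_subset (Finset.subset_univ _)]
  have : ({(⟨2 * j.val, by omega⟩ : Fin (2*t)), (⟨2 * j.val + 1, by omega⟩ : Fin (2*t))} :
      Finset (Fin (2*t))).card = 2 := by
    rw [Finset.card_insert_of_notMem (by simp [Fin.ext_iff]), Finset.card_singleton]
  rw [this, Finset.card_univ, Fintype.card_fin]

lemma pgen_pair_even {t : ℕ} (m : Fin t) {j : ℕ} (a b : Fin (2 * t))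
    (hab : a.val = 2 * j) (hbb : b.val = 2 * j + 1) :
    Even (pgen t m a + pgen t m b) := by
  rw [pgen_apply, pgen_apply, hab, hbb]
  by_cases h : j = m.val
  · rw [if_pos (by omega), if_pos (by omega)]
    exact Even.zero
  · rw [if_neg (by omega), if_neg (by omega)]
    exact ⟨1, rfl⟩

/-! ### The ideal as a monomial ideal and its powers -/

lemma gen_set_eq (K : Type*) [Field K] (t : ℕ) :
    {m : MvPolynomial (Fin (2*t)) K |
        ∃ i j, (tK2 t).Adj i j ∧ m = ∏ a ∈ Finset.univ \ {i, j}, X a} =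
      (fun s => monomial s (1 : K)) '' Set.range (pgen t) := by
  ext m
  constructor
  · rintro ⟨i, j, ⟨hne, hdiv⟩, rfl⟩
    have hi := i.isLt
    have hj := j.isLt
    have hvne : i.val ≠ j.val := fun h => hne (Fin.ext h)
    have hq : i.val / 2 < t := by omega
    have hset : ({i, j} : Finset (Fin (2*t))) =
        {⟨2 * (i.val / 2), by omega⟩, ⟨2 * (i.val / 2) + 1, by omega⟩} := by
      have hcase : i.val = 2 * (i.val / 2) ∧ j.val = 2 * (i.val / 2) + 1 ∨
          i.val = 2 * (i.val / 2) + 1 ∧ j.val = 2 * (i.val / 2) := by omega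
      rcases hcase with ⟨h1, h2⟩ | ⟨h1, h2⟩
      · congr 1
        · exact Fin.ext h1
        · congr 1; exact Fin.ext h2
      · rw [Finset.pair_comm]
        congr 1
        · exact Fin.ext h2
        · congr 1; exact Fin.ext h1
    refine ⟨pgen t ⟨i.val / 2, hq⟩, ⟨_, rfl⟩, ?_⟩
    rw [prod_X_eq_monomial, hset]
    rfl
  · rintro ⟨s, ⟨j, rfl⟩, rfl⟩
    have hj := j.isLt
    refine ⟨⟨2 * j.val, by omega⟩, ⟨2 * j.val + 1, by omega⟩,
      ⟨fun h => by simp [Fin.ext_iff] at h, by simp; omega⟩, ?_⟩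
    rw [prod_X_eq_monomial]
    rfl

lemma compEdgeIdeal_eq (K : Type*) [Field K] (t : ℕ) :
    compEdgeIdeal K (Fin (2*t)) (tK2 t) =
      Ideal.span ((fun s => monomial s (1 : K)) '' Set.range (pgen t)) := by
  rw [compEdgeIdeal, gen_set_eq]

/-- exponent vectors of the natural generators of `I^k` -/
def Tk (t : ℕ) : ℕ → Set (Fin (2 * t) →₀ ℕ)
  | 0 => {0}
  | k + 1 => Set.image2 (· + ·) (Tk t k) (Set.range (pgen t))

lemma pow_eq (K : Type*) [Field K] (t : ℕ) (k : ℕ) :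
    (compEdgeIdeal K (Fin (2*t)) (tK2 t)) ^ k =
      Ideal.span ((fun s => monomial s (1 : K)) '' Tk t k) := by
  induction k with
  | zero =>
    rw [pow_zero, Tk]
    rw [Set.image_singleton]
    have : (monomial (0 : Fin (2*t) →₀ ℕ) (1 : K)) = 1 := by
      rw [monomial_zero', C_1]
    rw [this, Ideal.span_singleton_one, Ideal.one_eq_top]
  | succ k ih =>
    rw [pow_succ, ih, compEdgeIdeal_eq, span_monomial_mul, Tk]

lemma Tk_pair_even {t : ℕ} (k : ℕ) {s : Fin (2*t) →₀ ℕ} (hs : s ∈ Tk t k)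
    {j : ℕ} (a b : Fin (2 * t)) (hab : a.val = 2 * j) (hbb : b.val = 2 * j + 1) :
    Even (s a + s b) := by
  induction k generalizing s with
  | zero =>
    rw [Tk] at hs
    rw [Set.mem_singleton_iff] at hs
    subst hs; simp
  | succ k ih =>
    rw [Tk] at hs
    rcases hs with ⟨u, hu, v, ⟨m, rfl⟩, rfl⟩
    have h1 := ih hu
    have h2 := pgen_pair_even m a b hab hbb
    rw [Finsupp.add_apply, Finsupp.add_apply]
    have : u a + pgen t m a + (u b + pgen t m b) =
        (u a + u b) + (pgen t m a + pgen t m b) := by ring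
    rw [this]
    exact h1.add h2

lemma Tk_deg {t : ℕ} (k : ℕ) {s : Fin (2*t) →₀ ℕ} (hs : s ∈ Tk t k) :
    deg s = (2 * t - 2) * k := by
  induction k generalizing s with
  | zero =>
    rw [Tk, Set.mem_singleton_iff] at hs
    subst hs
    simp [deg]
  | succ k ih =>
    rw [Tk] at hs
    rcases hs with ⟨u, hu, v, ⟨m, rfl⟩, rfl⟩
    rw [deg_add, ih hu, deg_pgen]
    ring

lemma mem_pow_iff (K : Type*) [Field K] (t : ℕ) (k : ℕ) (d : Fin (2*t) →₀ ℕ) :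
    monomial d (1 : K) ∈ (compEdgeIdeal K (Fin (2*t)) (tK2 t)) ^ k ↔
      ∃ s ∈ Tk t k, s ≤ d := by
  classical
  rw [pow_eq, mem_ideal_span_monomial_image]
  have hsupp : (monomial d (1 : K)).support = {d} := by
    rw [support_monomial, if_neg one_ne_zero]
  rw [hsupp]
  simp

lemma smul_pgen_mem_Tk {t : ℕ} (j : Fin t) : ∀ k : ℕ, (k • pgen t j) ∈ Tk t k
  | 0 => by simp [Tk]
  | (k+1) => by
    rw [Tk, succ_nsmul]
    exact ⟨_, smul_pgen_mem_Tk j k, _, ⟨j, rfl⟩, rfl⟩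

end Stmt12Aux

open Stmt12Aux

theorem stmt12 {K : Type*} [Field K] {t : ℕ} (ht : 2 ≤ t) :
    (∀ k : ℕ, 1 ≤ k → ∀ d : Fin (2 * t) →₀ ℕ,
      IsMinGen ((compEdgeIdeal K (Fin (2 * t)) (tK2 t)) ^ k) d →
      Even (d ⟨0, by omega⟩ + d ⟨1, by omega⟩)) ∧
    (∀ k : ℕ, 1 ≤ k → ¬ ∃ d : Fin (2 * t) →₀ ℕ,
      (d.sum fun _ e => e) = (2 * t - 2) * k - 1 ∧
      ∃ F : Finset (Fin (2 * t)),
        Submodule.colon ((compEdgeIdeal K (Fin (2 * t)) (tK2 t)) ^ k)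
            (Ideal.span {monomial d (1 : K)}) =
          Ideal.span ((fun i : Fin (2 * t) =>
            (X i : MvPolynomial (Fin (2 * t)) K)) '' ↑F)) := by
  set I := compEdgeIdeal K (Fin (2 * t)) (tK2 t) with hI
  -- key step: a minimal generator's exponent vector lies in `Tk t k`
  have key : ∀ k : ℕ, ∀ d : Fin (2 * t) →₀ ℕ, IsMinGen (I ^ k) d → d ∈ Tk t k := by
    intro k d ⟨hmem, hmin⟩
    obtain ⟨s, hs, hsd⟩ := (mem_pow_iff K t k d).mp hmem
    rcases eq_or_ne s d with rfl | hne
    · exact hs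
    · exfalso
      apply hmin
      have hc : d - s ≠ 0 := fun h => hne (by
        have := tsub_add_cancel_of_le hsd
        rw [h, zero_add] at this; exact this)
      obtain ⟨i, hi⟩ := Finsupp.ne_iff.mp hc
      rw [Finsupp.zero_apply] at hi
      have hsingle : Finsupp.single i 1 ≤ d - s := by
        rw [Finsupp.single_le_iff]
        omega
      have e1 : (d - s) - Finsupp.single i 1 + Finsupp.single i 1 = d - s :=
        tsub_add_cancel_of_le hsingle
      have e2 : d - s + s = d := tsub_add_cancel_of_le hsd
      have hdecomp : Finsupp.single i 1 + ((d - s) - Finsupp.single i 1) + s = d := by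
        rw [add_comm (Finsupp.single i 1), e1, e2]
      have hfac : monomial d (1 : K) =
          X i * (monomial ((d - s) - Finsupp.single i 1) 1 * monomial s 1) := by
        rw [X, monomial_mul, monomial_mul, one_mul, one_mul, ← add_assoc, hdecomp]
      have hsmem : monomial s (1 : K) ∈ I ^ k := (mem_pow_iff K t k s).mpr ⟨s, hs, le_refl s⟩
      rw [hfac]
      exact Ideal.mul_mem_mul (Ideal.subset_span ⟨i, rfl⟩) (Ideal.mul_mem_left _ _ hsmem)
  constructor
  · -- Part 1
    intro k _ d hd
    exact Tk_pair_even k (key k d hd) (j := 0) ⟨0, by omega⟩ ⟨1, by omega⟩ rfl rfl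
  · -- Part 2
    intro k hk hex
    classical
    obtain ⟨d, hdeg, F, hcolon⟩ := hex
    -- membership in the colon ideal
    have hcol : ∀ r : MvPolynomial (Fin (2 * t)) K,
        r ∈ Ideal.span ((fun i : Fin (2 * t) =>
            (X i : MvPolynomial (Fin (2 * t)) K)) '' ↑F) ↔
          r * monomial d (1 : K) ∈ I ^ k := by
      intro r
      rw [← hcolon, ← Ideal.submodule_span_eq, Submodule.mem_colon_span_singleton, smul_eq_mul]
    -- variable membership
    have hXF : ∀ i : Fin (2 * t), (X i : MvPolynomial (Fin (2 * t)) K) ∈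
        Ideal.span ((fun i : Fin (2 * t) =>
            (X i : MvPolynomial (Fin (2 * t)) K)) '' ↑F) ↔ i ∈ F := by
      intro i
      constructor
      · intro h
        rw [mem_ideal_span_X_image] at h
        obtain ⟨j, hj, hmj⟩ := h (Finsupp.single i 1) (by
          rw [support_X]; exact Finset.mem_singleton_self _)
        have hij : i = j := by
          by_contra hne
          rw [Finsupp.single_apply, if_neg hne] at hmj
          exact hmj rfl
        rwa [← hij] at hj
      · intro h
        exact Ideal.subset_span ⟨i, h, rfl⟩
    -- key: for i ∈ F, the vector single i 1 + d belongs to Tk t k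
    have hkey : ∀ i ∈ F, (Finsupp.single i 1 + d) ∈ Tk t k := by
      intro i hiF
      have hXi : (X i : MvPolynomial (Fin (2 * t)) K) * monomial d 1 ∈ I ^ k :=
        (hcol (X i)).mp ((hXF i).mpr hiF)
      rw [X, monomial_mul, one_mul] at hXi
      obtain ⟨s, hs, hsle⟩ := (mem_pow_iff K t k _).mp hXi
      have hdegs : deg s = (2 * t - 2) * k := Tk_deg k hs
      have htk : 1 ≤ (2 * t - 2) * k := Nat.mul_pos (by omega) hk
      have hdegv : deg (Finsupp.single i 1 + d) = (2 * t - 2) * k := by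
        rw [deg_add, deg_single]
        show 1 + d.sum (fun _ e => e) = _
        rw [hdeg]
        exact Nat.add_sub_cancel' htk
      have := eq_of_le_of_deg_eq hsle (by rw [hdegs, hdegv])
      rwa [this] at hs
    -- generator powers are in the span of X '' F
    have hgen_mem : ∀ j : Fin t, ∃ i ∈ F, (k • pgen t j) i ≠ 0 := by
      intro j
      have hp : (monomial (pgen t j) (1 : K)) ^ k ∈
          Ideal.span ((fun i : Fin (2 * t) =>
            (X i : MvPolynomial (Fin (2 * t)) K)) '' ↑F) := by
        rw [hcol]
        apply Ideal.mul_mem_right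
        rw [monomial_pow, one_pow]
        exact (mem_pow_iff K t k _).mpr ⟨k • pgen t j, smul_pgen_mem_Tk j k, le_refl _⟩
      rw [mem_ideal_span_X_image] at hp
      have hsup : ((monomial (pgen t j) (1 : K)) ^ k).support = {k • pgen t j} := by
        rw [monomial_pow, one_pow, support_monomial, if_neg one_ne_zero]
      obtain ⟨i, hiF, hi⟩ := hp (k • pgen t j) (by rw [hsup]; exact Finset.mem_singleton_self _)
      exact ⟨i, hiF, hi⟩
    -- pick i0 ∈ F and its pair index j0
    obtain ⟨i0, hi0F, -⟩ := hgen_mem ⟨0, by omega⟩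
    have hi0lt := i0.isLt
    set j0 : ℕ := i0.val / 2 with hj0
    have ha : 2 * j0 < 2 * t := by omega
    have hb : 2 * j0 + 1 < 2 * t := by omega
    set a : Fin (2 * t) := ⟨2 * j0, ha⟩ with ha'
    set b : Fin (2 * t) := ⟨2 * j0 + 1, hb⟩ with hb'
    -- d has odd pair sum at pair j0
    have hodd : ¬ Even (d a + d b) := by
      intro hcon
      have hmem := hkey i0 hi0F
      have hev := Tk_pair_even k hmem (j := j0) a b rfl rfl
      rw [Finsupp.add_apply, Finsupp.add_apply] at hev
      have hs1 : Finsupp.single i0 (1:ℕ) a + Finsupp.single i0 (1:ℕ) b = 1 := by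
        rw [Finsupp.single_apply, Finsupp.single_apply]
        have hc : i0.val = 2 * j0 ∨ i0.val = 2 * j0 + 1 := by omega
        rcases hc with h | h
        · rw [if_pos (Fin.ext h), if_neg (fun he => by
            have h2 : i0.val = 2 * j0 + 1 := congrArg Fin.val he
            omega)]
          rfl
        · rw [if_neg (fun he => by
            have h2 : i0.val = 2 * j0 := congrArg Fin.val he
            omega), if_pos (Fin.ext h)]
      obtain ⟨w, hw⟩ := hev
      obtain ⟨w2, hw2⟩ := hcon
      omega
    -- every element of F belongs to the pair {2*j0, 2*j0+1}
    have hFsub : ∀ i ∈ F, i.val = 2 * j0 ∨ i.val = 2 * j0 + 1 := by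
      intro i hiF
      by_contra hcon
      push_neg at hcon
      apply hodd
      have hmem := hkey i hiF
      have hev := Tk_pair_even k hmem (j := j0) a b rfl rfl
      rw [Finsupp.add_apply, Finsupp.add_apply] at hev
      rw [Finsupp.single_apply, Finsupp.single_apply,
        if_neg (fun he => hcon.1 (congrArg Fin.val he)),
        if_neg (fun he => hcon.2 (congrArg Fin.val he))] at hev
      simpa using hev
    -- contradiction with the generator of the pair j0
    have hj0t : j0 < t := by omega
    obtain ⟨i, hiF, hine⟩ := hgen_mem ⟨j0, hj0t⟩
    apply hine
    have hz : pgen t ⟨j0, hj0t⟩ i = 0 := by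
      rw [pgen_apply]
      exact if_pos (hFsub i hiF)
    rw [Finsupp.smul_apply, hz, smul_zero]
end

section
/- Let G be a finite simple graph on [n], n ≥ 3, with no isolated vertices, and let F ⊆ [n] with |F| ≥ 2 such that the induced subgraph G|_F has no isolated vertices and no bipartite connected component. Then for all k ≥ max{1, |F|−2}, the monomial localization satisfies (I_c(G)^k)(P_F) = I_c(G|_F)^k. -/
open MvPolynomial

/-- The connected component of `v` in `H` is bipartite. -/
def CompBipartite {V : Type*} (H : SimpleGraph V) (v : V) : Prop :=
  ∃ c : V → Bool, ∀ a b, H.Adj a b → H.Reachable v a → c a ≠ c b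


lemma monLoc_prod {K : Type*} [Field K] {n : ℕ} (F : Finset (Fin n)) (A : Finset (Fin n)) :
    monLoc K F (∏ t ∈ A, X t) = ∏ u ∈ A.subtype (· ∈ F), (X u : MvPolynomial {i : Fin n // i ∈ F} K) := by
  rw [map_prod]
  simp only [monLoc, aeval_X]
  rw [← Finset.prod_filter_mul_prod_filter_not A (· ∈ F)]
  have h2 : ∏ t ∈ A.filter (fun t => ¬ t ∈ F), (if h : t ∈ F then (X ⟨t, h⟩ : MvPolynomial {i : Fin n // i ∈ F} K) else 1) = 1 := by
    apply Finset.prod_eq_one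
    intro x hx
    rw [dif_neg (Finset.mem_filter.mp hx).2]
  rw [h2, mul_one]
  rw [← Finset.subtype_map (p := (· ∈ F)) (s := A)]
  rw [Finset.prod_subtype_map_embedding (f := fun u => (X u : MvPolynomial {i : Fin n // i ∈ F} K))]
  intro x _
  simp

-- generator membership helper
lemma gen_mem {K : Type*} [Field K] {V : Type*} [Fintype V] [DecidableEq V]
    {G : SimpleGraph V} {a b : V} (h : G.Adj a b) :
    (∏ t ∈ Finset.univ \ {a, b}, X t : MvPolynomial V K) ∈ compEdgeIdeal K V G :=
  Ideal.subset_span ⟨a, b, h, rfl⟩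

-- split product lemma: for a ≠ b
lemma prod_split {K : Type*} [Field K] {V : Type*} [Fintype V] [DecidableEq V]
    (a b : V) (hab : a ≠ b) :
    (∏ t ∈ Finset.univ \ {a}, X t : MvPolynomial V K)
      = X b * ∏ t ∈ Finset.univ \ {a, b}, X t := by
  have hb : b ∈ Finset.univ \ ({a} : Finset V) := by simp [Ne.symm hab]
  have hs : Finset.univ \ ({a, b} : Finset V) = (Finset.univ \ {a}) \ {b} := by
    ext u
    simp only [Finset.mem_sdiff, Finset.mem_univ, Finset.mem_insert, Finset.mem_singleton, true_and]
    tauto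
  rw [hs, ← Finset.prod_eq_mul_prod_sdiff_singleton_of_mem hb]

lemma monLoc_map {K : Type*} [Field K] {n : ℕ} (G : SimpleGraph (Fin n))
    (F : Finset (Fin n)) (hFne : F.Nonempty)
    (hFiso : ∀ v : {i : Fin n // i ∈ F}, ∃ w : {i : Fin n // i ∈ F},
      (G.comap (Subtype.val : {i : Fin n // i ∈ F} → Fin n)).Adj v w) :
    Ideal.map (monLoc K F) (compEdgeIdeal K (Fin n) G) =
      compEdgeIdeal K {i : Fin n // i ∈ F}
        (G.comap (Subtype.val : {i : Fin n // i ∈ F} → Fin n)) := by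
  unfold compEdgeIdeal
  rw [Ideal.map_span]
  apply le_antisymm
  · rw [Ideal.span_le]
    rintro m ⟨p, ⟨i, j, hadj, rfl⟩, rfl⟩
    rw [monLoc_prod]
    by_cases hi : i ∈ F <;> by_cases hj : j ∈ F
    · have : (Finset.univ \ {i, j}).subtype (· ∈ F)
          = Finset.univ \ {(⟨i, hi⟩ : {i : Fin n // i ∈ F}), ⟨j, hj⟩} := by
        ext u; simp [Subtype.ext_iff]
      rw [this]
      exact Ideal.subset_span ⟨⟨i, hi⟩, ⟨j, hj⟩, hadj, rfl⟩
    · have : (Finset.univ \ {i, j}).subtype (· ∈ F)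
          = Finset.univ \ {(⟨i, hi⟩ : {i : Fin n // i ∈ F})} := by
        ext u
        simp only [Finset.mem_subtype, Finset.mem_sdiff, Finset.mem_univ, true_and,
          Finset.mem_insert, Finset.mem_singleton, Subtype.ext_iff]
        constructor
        · rintro h hh; exact h (Or.inl hh)
        · rintro h hh
          rcases hh with h1 | h1
          · exact h h1
          · exact hj (h1 ▸ u.2)
      rw [this]
      obtain ⟨w, hw⟩ := hFiso ⟨i, hi⟩
      rw [prod_split _ _ hw.ne]
      exact Ideal.mul_mem_left _ _ (Ideal.subset_span ⟨⟨i, hi⟩, w, hw, rfl⟩)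
    · have : (Finset.univ \ {i, j}).subtype (· ∈ F)
          = Finset.univ \ {(⟨j, hj⟩ : {i : Fin n // i ∈ F})} := by
        ext u
        simp only [Finset.mem_subtype, Finset.mem_sdiff, Finset.mem_univ, true_and,
          Finset.mem_insert, Finset.mem_singleton, Subtype.ext_iff]
        constructor
        · rintro h hh; exact h (Or.inr hh)
        · rintro h hh
          rcases hh with h1 | h1
          · exact hi (h1 ▸ u.2)
          · exact h h1
      rw [this]
      obtain ⟨w, hw⟩ := hFiso ⟨j, hj⟩
      rw [prod_split _ _ hw.ne]
      exact Ideal.mul_mem_left _ _ (Ideal.subset_span ⟨⟨j, hj⟩, w, hw, rfl⟩)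
    · have : (Finset.univ \ {i, j}).subtype (· ∈ F) = Finset.univ := by
        ext u
        simp only [Finset.mem_subtype, Finset.mem_sdiff, Finset.mem_univ, true_and,
          Finset.mem_insert, Finset.mem_singleton, iff_true]
        rintro (h1 | h1)
        · exact hi (h1 ▸ u.2)
        · exact hj (h1 ▸ u.2)
      rw [this]
      obtain ⟨v, hv⟩ := hFne
      obtain ⟨w, hw⟩ := hFiso ⟨v, hv⟩
      rw [Finset.prod_eq_mul_prod_sdiff_singleton_of_mem
        (Finset.mem_univ (⟨v, hv⟩ : {i : Fin n // i ∈ F}))]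
      rw [prod_split _ _ hw.ne]
      exact Ideal.mul_mem_left _ _
        (Ideal.mul_mem_left _ _ (Ideal.subset_span ⟨⟨v, hv⟩, w, hw, rfl⟩))
  · rw [Ideal.span_le]
    rintro m ⟨v, w, hadj, rfl⟩
    apply Ideal.subset_span
    refine ⟨∏ t ∈ Finset.univ \ {v.val, w.val}, X t,
      ⟨v.val, w.val, hadj, rfl⟩, ?_⟩
    rw [monLoc_prod]
    congr 1
    ext u
    simp only [Finset.mem_subtype, Finset.mem_sdiff, Finset.mem_univ, true_and, Finset.mem_insert, Finset.mem_singleton, Subtype.ext_iff]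

theorem stmt19 {K : Type*} [Field K] {n : ℕ} (hn : 3 ≤ n) (G : SimpleGraph (Fin n))
    (hiso : ∀ i : Fin n, ∃ j, G.Adj i j)
    (F : Finset (Fin n)) (hF : 2 ≤ F.card)
    (hFiso : ∀ v : {i : Fin n // i ∈ F}, ∃ w : {i : Fin n // i ∈ F},
      (G.comap (Subtype.val : {i : Fin n // i ∈ F} → Fin n)).Adj v w)
    (hFbip : ∀ v : {i : Fin n // i ∈ F},
      ¬ CompBipartite (G.comap (Subtype.val : {i : Fin n // i ∈ F} → Fin n)) v) :
    ∀ k : ℕ, max 1 (F.card - 2) ≤ k →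
      Ideal.map (monLoc K F) ((compEdgeIdeal K (Fin n) G) ^ k) =
        (compEdgeIdeal K {i : Fin n // i ∈ F}
          (G.comap (Subtype.val : {i : Fin n // i ∈ F} → Fin n))) ^ k := by

  intro k _
  rw [Ideal.map_pow, monLoc_map G F (Finset.card_pos.mp (by omega)) hFiso]
end
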